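/- arXiv:1506.01648 — 6 statements merged into one kernel-verified Lean document; each statement's English description precedes it below -/
import Mathlib

section
/- Let λ > 0, γ > 0 and p_SELO(β) = (λ/log 2)·log(|β|/(|β|+γ) + 1). If b > 0 and x₁, x₂ ∈ ℝ satisfy |x₁| ≥ b and |x₂| ≥ b, then |p_SELO(x₂) − p_SELO(x₁)| ≤ (λ γ / log 2) · | |x₂| − |x₁| | / b². -/
lemma log_lip_ge_one {a c : ℝ} (ha : 1 ≤ a) (hc : 1 ≤ c) :
    |Real.log a - Real.log c| ≤ |a - c| := by
  wlog h : c ≤ a generalizing a c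
  · rw [abs_sub_comm, abs_sub_comm a c]; exact this hc ha (le_of_not_ge h)
  have hc0 : 0 < c := lt_of_lt_of_le one_pos hc
  have hlog : Real.log c ≤ Real.log a := Real.log_le_log hc0 h
  rw [abs_of_nonneg (sub_nonneg.2 hlog), abs_of_nonneg (sub_nonneg.2 h)]
  have := Real.log_le_sub_one_of_pos (x := a / c) (by positivity)
  rw [← Real.log_div (by linarith) (by linarith)] at *
  calc Real.log (a / c) ≤ a / c - 1 := this
    _ ≤ a - c := by
        rw [div_sub_one (by linarith), div_le_iff₀ hc0]
        nlinarith

/-- Lipschitz-type bound for the SELO penalty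
`p_SELO(β) = (λ/log 2) · log(|β|/(|β|+γ) + 1)` away from zero. -/
theorem selo_penalty_lipschitz_away_from_zero (lam γ b : ℝ)
    (hlam : 0 < lam) (hγ : 0 < γ) (hb : 0 < b) (x₁ x₂ : ℝ)
    (hx₁ : b ≤ |x₁|) (hx₂ : b ≤ |x₂|) :
    |(lam / Real.log 2) * Real.log (|x₂| / (|x₂| + γ) + 1) -
        (lam / Real.log 2) * Real.log (|x₁| / (|x₁| + γ) + 1)| ≤
      (lam * γ / Real.log 2) * |(|x₂| - |x₁|)| / b ^ 2 := by
  set u := |x₁| with hu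
  set v := |x₂| with hv
  have hu0 : 0 < u := lt_of_lt_of_le hb hx₁
  have hv0 : 0 < v := lt_of_lt_of_le hb hx₂
  have huγ : 0 < u + γ := by linarith
  have hvγ : 0 < v + γ := by linarith
  have hlog2 : 0 < Real.log 2 := Real.log_pos (by norm_num)
  have h1 : (1:ℝ) ≤ v / (v + γ) + 1 := le_add_of_nonneg_left (by positivity)
  have h2 : (1:ℝ) ≤ u / (u + γ) + 1 := le_add_of_nonneg_left (by positivity)
  have key : |v / (v + γ) + 1 - (u / (u + γ) + 1)| ≤ γ * |v - u| / b ^ 2 := by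
    have hid : v / (v + γ) + 1 - (u / (u + γ) + 1) = γ * (v - u) / ((u + γ) * (v + γ)) := by
      field_simp; ring
    rw [hid, abs_div, abs_mul, abs_of_pos hγ, abs_of_pos (mul_pos huγ hvγ)]
    apply div_le_div_of_nonneg_left (by positivity) (by positivity)
    · calc b ^ 2 ≤ u * v := by nlinarith
        _ ≤ (u + γ) * (v + γ) := by nlinarith
  calc |(lam / Real.log 2) * Real.log (v / (v + γ) + 1) -
        (lam / Real.log 2) * Real.log (u / (u + γ) + 1)|
      = (lam / Real.log 2) * |Real.log (v / (v + γ) + 1) - Real.log (u / (u + γ) + 1)| := by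
        rw [← mul_sub, abs_mul, abs_of_pos (by positivity)]
    _ ≤ (lam / Real.log 2) * (γ * |v - u| / b ^ 2) := by
        apply mul_le_mul_of_nonneg_left _ (by positivity)
        exact (log_lip_ge_one h1 h2).trans key
    _ = (lam * γ / Real.log 2) * |v - u| / b ^ 2 := by ring
end

section
/- Suppose (ε_i)_{1≤i≤n} are i.i.d. real random variables, assumptions (A2) and (A3) hold for the deterministic designs X_{n,i} ∈ ℝ^{d_n}, and s_n = O(n^a) for some a ∈ (0,1/2). Then for every δ > 0, the centered empirical quantile process is uniformly bounded over small models: sup over index sets 𝒜 ⊆ {1,…,d_n} with |𝒜| ≤ s_n, and over θ ∈ ℝ^{|𝒜|} with ‖θ‖₂ ≤ δ, of | Σ_{i=1}^n g_𝒜(ε_i, θ) | is O_P( n^{(1+a)/2} d_n^{1/2} ); that is, for every ε > 0 there exists C > 0 such that for all n large enough, P[ sup_{|𝒜|≤s_n} sup_{‖θ‖₂≤δ} |Σ_{i=1}^n g_𝒜(ε_i,θ)| ≥ C n^{(1+a)/2} d_n^{1/2} ] ≤ ε. -/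
open MeasureTheory ProbabilityTheory Filter
open scoped RealInnerProductSpace

noncomputable def rho (τ u : ℝ) : ℝ := u * (τ - if u < 0 then 1 else 0)

lemma measurable_rho (τ : ℝ) : Measurable (rho τ) := by
  unfold rho
  exact measurable_id.mul (measurable_const.sub
    (Measurable.ite measurableSet_Iio measurable_const measurable_const))

lemma abs_rho_sub_rho {τ : ℝ} (h0 : 0 ≤ τ) (h1 : τ ≤ 1) (u v : ℝ) :
    |rho τ u - rho τ v| ≤ 2 * |u - v| := by
  have h := le_abs_self (u - v)
  have h' := neg_abs_le (u - v)
  unfold rho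
  rcases lt_or_ge u 0 with hu | hu <;> rcases lt_or_ge v 0 with hv | hv <;>
    simp only [if_pos, if_neg, hu, hv, not_lt.mpr, if_true, if_false] <;>
    rw [abs_le] <;> constructor <;>
    nlinarith [abs_nonneg (u - v),
      mul_nonneg h0 (by linarith : 0 ≤ |u - v| - (u - v)),
      mul_nonneg h0 (by linarith : 0 ≤ |u - v| + (u - v)),
      mul_nonneg (by linarith : (0:ℝ) ≤ 1 - τ) (by linarith : 0 ≤ |u - v| - (u - v)),
      mul_nonneg (by linarith : (0:ℝ) ≤ 1 - τ) (by linarith : 0 ≤ |u - v| + (u - v)),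
      mul_nonneg (by linarith : (0:ℝ) ≤ 1 - τ) (abs_nonneg (u - v)),
      mul_nonneg h0 (abs_nonneg (u - v))]

lemma exp_le_add_exp_sq (z : ℝ) : Real.exp z ≤ z + Real.exp (z ^ 2) := by
  rcases le_or_gt (|z|) 1 with hz | hz
  · have hb := Real.exp_bound hz (n := 2) (by norm_num)
    have h2 : Real.exp z ≤ 1 + z + z ^ 2 := by
      have : ∑ m ∈ Finset.range 2, z ^ m / m.factorial = 1 + z := by
        simp [Finset.sum_range_succ]
      rw [this] at hb
      norm_num [Nat.factorial] at hb
      have habs : |z| ^ 2 = z ^ 2 := sq_abs z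
      have h4 := (abs_le.mp hb).2
      nlinarith
    have h3 : 1 + z ^ 2 ≤ Real.exp (z ^ 2) := by
      have := Real.add_one_le_exp (z ^ 2); linarith
    linarith
  · rcases le_or_gt 0 z with hz0 | hz0
    · have h1 : z ≤ z ^ 2 := by nlinarith [abs_of_nonneg hz0]
      have := Real.exp_le_exp.mpr h1
      linarith
    · have h1 : Real.exp z ≤ 1 := Real.exp_le_one_iff.mpr hz0.le
      have h2 : 1 + z ^ 2 ≤ Real.exp (z ^ 2) := by
        have := Real.add_one_le_exp (z ^ 2); linarith
      have h3 : -z ≤ z ^ 2 := by nlinarith [abs_of_neg hz0]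
      linarith

lemma integrable_exp_mul_of_bounded {Ω : Type*} [MeasureSpace Ω]
    [IsProbabilityMeasure (ℙ : Measure Ω)]
    {Y : Ω → ℝ} (hY : Measurable Y) {c : ℝ} (hc : ∀ ω, |Y ω| ≤ c) (t : ℝ) :
    Integrable (fun ω => Real.exp (t * Y ω)) ℙ := by
  refine Integrable.mono' (integrable_const (Real.exp (|t| * c)))
    ((hY.const_mul t).exp.aestronglyMeasurable) ?_
  filter_upwards with ω
  rw [Real.norm_eq_abs, Real.abs_exp]
  refine Real.exp_le_exp.mpr (le_trans (le_abs_self _) ?_)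
  rw [abs_mul]
  exact mul_le_mul_of_nonneg_left (hc ω) (abs_nonneg t)

lemma integrable_of_bounded' {Ω : Type*} [MeasureSpace Ω]
    [IsProbabilityMeasure (ℙ : Measure Ω)]
    {Y : Ω → ℝ} (hY : Measurable Y) {c : ℝ} (hc : ∀ ω, |Y ω| ≤ c) :
    Integrable Y ℙ := by
  refine Integrable.mono' (integrable_const c) hY.aestronglyMeasurable ?_
  filter_upwards with ω
  exact hc ω

lemma mgf_le_of_abs_le {Ω : Type*} [MeasureSpace Ω]
    [IsProbabilityMeasure (ℙ : Measure Ω)]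
    {Y : Ω → ℝ} (hY : Measurable Y) {c : ℝ} (hc : ∀ ω, |Y ω| ≤ c)
    (h0 : (∫ ω, Y ω) = 0) (t : ℝ) :
    mgf Y ℙ t ≤ Real.exp (t ^ 2 * c ^ 2) := by
  have hint : Integrable Y ℙ := integrable_of_bounded' hY hc
  have hpt : ∀ ω, Real.exp (t * Y ω) ≤ t * Y ω + Real.exp (t ^ 2 * c ^ 2) := by
    intro ω
    refine (exp_le_add_exp_sq (t * Y ω)).trans (add_le_add le_rfl ?_)
    refine Real.exp_le_exp.mpr ?_
    rw [mul_pow]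
    have h1 : Y ω ^ 2 ≤ c ^ 2 := by
      rw [← sq_abs]
      exact pow_le_pow_left₀ (abs_nonneg _) (hc ω) 2
    exact mul_le_mul_of_nonneg_left h1 (sq_nonneg t)
  have hintr : Integrable (fun ω => t * Y ω + Real.exp (t ^ 2 * c ^ 2)) ℙ :=
    (hint.const_mul t).add (integrable_const _)
  have := integral_mono (integrable_exp_mul_of_bounded hY hc t) hintr hpt
  rw [integral_add (hint.const_mul t) (integrable_const _), integral_const_mul, h0,
    integral_const, probReal_univ] at this
  simpa [mgf] using this

lemma hoeffding_one_sided {Ω : Type*} [MeasureSpace Ω]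
    [IsProbabilityMeasure (ℙ : Measure Ω)]
    (Y : ℕ → Ω → ℝ) (hm : ∀ i, Measurable (Y i))
    (hi : iIndepFun Y ℙ) (c : ℕ → ℝ)
    (hb : ∀ i ω, |Y i ω| ≤ c i) (h0 : ∀ i, (∫ ω, Y i ω) = 0)
    (n : ℕ) (u V : ℝ) (hu : 0 < u) (hV : 0 < V)
    (hVle : ∑ i ∈ Finset.range n, c i ^ 2 ≤ V) :
    ℙ {ω | u ≤ ∑ i ∈ Finset.range n, Y i ω} ≤
      ENNReal.ofReal (Real.exp (-u ^ 2 / (4 * V))) := by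
  set t : ℝ := u / (2 * V) with ht_def
  have ht : 0 ≤ t := div_nonneg hu.le (by linarith)
  have h_int : ∀ i ∈ Finset.range n, Integrable (fun ω => Real.exp (t * Y i ω)) ℙ :=
    fun i _ => integrable_exp_mul_of_bounded (hm i) (hb i) t
  have h_int_sum : Integrable (fun ω => Real.exp (t * (∑ i ∈ Finset.range n, Y i) ω)) ℙ :=
    hi.integrable_exp_mul_sum hm h_int
  have key := measure_ge_le_exp_mul_mgf (X := ∑ i ∈ Finset.range n, Y i) (μ := ℙ) u ht h_int_sum
  have hmgf : mgf (∑ i ∈ Finset.range n, Y i) ℙ t ≤ Real.exp (t ^ 2 * V) := by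
    rw [hi.mgf_sum hm (Finset.range n)]
    calc ∏ i ∈ Finset.range n, mgf (Y i) ℙ t
        ≤ ∏ i ∈ Finset.range n, Real.exp (t ^ 2 * c i ^ 2) :=
          Finset.prod_le_prod (fun i _ => mgf_nonneg)
            (fun i _ => mgf_le_of_abs_le (hm i) (hb i) (h0 i) t)
      _ = Real.exp (∑ i ∈ Finset.range n, t ^ 2 * c i ^ 2) := (Real.exp_sum _ _).symm
      _ ≤ Real.exp (t ^ 2 * V) := by
          refine Real.exp_le_exp.mpr ?_
          rw [← Finset.mul_sum]
          exact mul_le_mul_of_nonneg_left hVle (sq_nonneg t)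
  have hset : {ω | u ≤ ∑ i ∈ Finset.range n, Y i ω} =
      {ω | u ≤ (∑ i ∈ Finset.range n, Y i) ω} := by
    ext ω; simp [Finset.sum_apply]
  have hfin : Real.exp (-t * u) * mgf (∑ i ∈ Finset.range n, Y i) ℙ t ≤
      Real.exp (-u ^ 2 / (4 * V)) := by
    calc Real.exp (-t * u) * mgf (∑ i ∈ Finset.range n, Y i) ℙ t
        ≤ Real.exp (-t * u) * Real.exp (t ^ 2 * V) := by
          exact mul_le_mul_of_nonneg_left hmgf (Real.exp_pos _).le
      _ = Real.exp (-t * u + t ^ 2 * V) := (Real.exp_add _ _).symm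
      _ = Real.exp (-u ^ 2 / (4 * V)) := by
          congr 1
          rw [ht_def]
          field_simp
          ring
  rw [hset]
  refine (ENNReal.le_ofReal_iff_toReal_le (measure_ne_top _ _) (Real.exp_pos _).le).mpr ?_
  exact key.trans hfin

lemma hoeffding_abs {Ω : Type*} [MeasureSpace Ω]
    [IsProbabilityMeasure (ℙ : Measure Ω)]
    (Y : ℕ → Ω → ℝ) (hm : ∀ i, Measurable (Y i))
    (hi : iIndepFun Y ℙ) (c : ℕ → ℝ)
    (hb : ∀ i ω, |Y i ω| ≤ c i) (h0 : ∀ i, (∫ ω, Y i ω) = 0)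
    (n : ℕ) (u V : ℝ) (hu : 0 < u) (hV : 0 < V)
    (hVle : ∑ i ∈ Finset.range n, c i ^ 2 ≤ V) :
    ℙ {ω | u ≤ |∑ i ∈ Finset.range n, Y i ω|} ≤
      ENNReal.ofReal (2 * Real.exp (-u ^ 2 / (4 * V))) := by
  have hsub : {ω | u ≤ |∑ i ∈ Finset.range n, Y i ω|} ⊆
      {ω | u ≤ ∑ i ∈ Finset.range n, Y i ω} ∪
      {ω | u ≤ ∑ i ∈ Finset.range n, (fun j => -(Y j)) i ω} := by
    intro ω hω
    simp only [Set.mem_setOf_eq] at hω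
    rcases le_abs.mp hω with h | h
    · exact Or.inl h
    · right
      simp only [Pi.neg_apply, Finset.sum_neg_distrib, Set.mem_setOf_eq]
      exact h
  have h2 : ℙ {ω | u ≤ ∑ i ∈ Finset.range n, (fun j => -(Y j)) i ω} ≤
      ENNReal.ofReal (Real.exp (-u ^ 2 / (4 * V))) := by
    refine hoeffding_one_sided (fun j => -(Y j)) (fun i => (hm i).neg) ?_ c
      (fun i ω => by simpa using hb i ω) (fun i => by simp only [Pi.neg_apply, integral_neg, h0 i, neg_zero]) n u V hu hV hVle
    exact hi.comp (fun _ => Neg.neg) (fun _ => measurable_neg)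
  have h1 := hoeffding_one_sided Y hm hi c hb h0 n u V hu hV hVle
  calc ℙ {ω | u ≤ |∑ i ∈ Finset.range n, Y i ω|}
      ≤ ℙ ({ω | u ≤ ∑ i ∈ Finset.range n, Y i ω} ∪
          {ω | u ≤ ∑ i ∈ Finset.range n, (fun j => -(Y j)) i ω}) := measure_mono hsub
    _ ≤ _ + _ := measure_union_le _ _
    _ ≤ ENNReal.ofReal (Real.exp (-u ^ 2 / (4 * V))) +
        ENNReal.ofReal (Real.exp (-u ^ 2 / (4 * V))) := add_le_add h1 h2
    _ = ENNReal.ofReal (2 * Real.exp (-u ^ 2 / (4 * V))) := by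
        rw [← ENNReal.ofReal_add (Real.exp_pos _).le (Real.exp_pos _).le, two_mul]

/-- increment of the check function -/
noncomputable def Gf (τ r x : ℝ) : ℝ := rho τ (r - x) - rho τ r

lemma Gf_abs_le {τ : ℝ} (h0 : 0 ≤ τ) (h1 : τ ≤ 1) (r x : ℝ) :
    |Gf τ r x| ≤ 2 * |x| := by
  have := abs_rho_sub_rho h0 h1 (r - x) r
  simpa [Gf] using this

lemma Gf_sub_abs_le {τ : ℝ} (h0 : 0 ≤ τ) (h1 : τ ≤ 1) (r x x' : ℝ) :
    |Gf τ r x - Gf τ r x'| ≤ 2 * |x - x'| := by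
  have := abs_rho_sub_rho h0 h1 (r - x) (r - x')
  have h2 : rho τ (r - x) - rho τ (r - x') = Gf τ r x - Gf τ r x' := by
    unfold Gf; ring
  rw [h2] at this
  refine this.trans (le_of_eq ?_)
  congr 1
  rw [show r - x - (r - x') = -(x - x') by ring, abs_neg]

lemma Gf_meas (τ x : ℝ) : Measurable (fun r => Gf τ r x) := by
  unfold Gf
  exact ((measurable_rho τ).comp (measurable_id.sub_const x)).sub (measurable_rho τ)

section integral
variable {Ω : Type*} [MeasureSpace Ω] [IsProbabilityMeasure (ℙ : Measure Ω)]
  {τ : ℝ} {g : Ω → ℝ}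

lemma Gf_integrable (h0 : 0 ≤ τ) (h1 : τ ≤ 1) (hg : Measurable g) (x : ℝ) : Integrable (fun ω => Gf τ (g ω) x) ℙ := by
  refine Integrable.mono' (integrable_const (2 * |x|))
    (((Gf_meas τ x).comp hg).aestronglyMeasurable) ?_
  filter_upwards with ω
  exact Gf_abs_le h0 h1 (g ω) x

lemma Gf_integral_abs_le (h0 : 0 ≤ τ) (h1 : τ ≤ 1) (x : ℝ) : |∫ ω, Gf τ (g ω) x| ≤ 2 * |x| := by
  have := norm_integral_le_of_norm_le_const (μ := (ℙ : Measure Ω))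
    (f := fun ω => Gf τ (g ω) x) (C := 2 * |x|) ?_
  · simpa using this
  · filter_upwards with ω
    exact Gf_abs_le h0 h1 (g ω) x

lemma Gf_integral_sub_abs_le (h0 : 0 ≤ τ) (h1 : τ ≤ 1) (hg : Measurable g) (x x' : ℝ) :
    |(∫ ω, Gf τ (g ω) x) - ∫ ω, Gf τ (g ω) x'| ≤ 2 * |x - x'| := by
  rw [← integral_sub (Gf_integrable h0 h1 hg x) (Gf_integrable h0 h1 hg x')]
  have := norm_integral_le_of_norm_le_const (μ := (ℙ : Measure Ω))
    (f := fun ω => Gf τ (g ω) x - Gf τ (g ω) x') (C := 2 * |x - x'|) ?_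
  · simpa using this
  · filter_upwards with ω
    exact Gf_sub_abs_le h0 h1 (g ω) x x'

end integral

/-- coefficient `x_i = X_i^t θ` over a submodel -/
noncomputable def xcoef {n m : ℕ} (X : Fin n → EuclideanSpace ℝ (Fin m))
    (A : Finset (Fin m)) (θ : ↥A → ℝ) (i : Fin n) : ℝ :=
  ∑ j : ↥A, X i j.val * θ j

lemma xcoef_sub {n m : ℕ} (X : Fin n → EuclideanSpace ℝ (Fin m))
    (A : Finset (Fin m)) (θ θ' : ↥A → ℝ) (i : Fin n) :
    xcoef X A θ i - xcoef X A θ' i = xcoef X A (fun j => θ j - θ' j) i := by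
  unfold xcoef
  rw [← Finset.sum_sub_distrib]
  exact Finset.sum_congr rfl fun j _ => by ring

/-- the zero-padded vector -/
noncomputable def padv {m : ℕ} (A : Finset (Fin m)) (φ : ↥A → ℝ) :
    EuclideanSpace ℝ (Fin m) :=
  WithLp.toLp 2 (fun k => if h : k ∈ A then φ ⟨k, h⟩ else 0)

lemma inner_padv {m : ℕ} (x : EuclideanSpace ℝ (Fin m)) (A : Finset (Fin m))
    (φ : ↥A → ℝ) : ⟪x, padv A φ⟫ = ∑ j : ↥A, x j.val * φ j := by
  classical
  rw [PiLp.inner_apply]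
  simp only [RCLike.inner_apply, conj_trivial]
  have h1 : ∑ k : Fin m, x k * padv A φ k = ∑ k ∈ A, x k * padv A φ k := by
    refine (Finset.sum_subset (Finset.subset_univ A) ?_).symm
    intro k _ hk
    simp [padv, hk]
  simp_rw [mul_comm ((padv A φ).ofLp _) _]
  rw [h1, ← Finset.sum_attach A (fun k => x k * padv A φ k)]
  refine Finset.sum_congr rfl fun j _ => ?_
  simp [padv, j.prop]

lemma sum_sq_padv {m : ℕ} (A : Finset (Fin m)) (φ : ↥A → ℝ) :
    ∑ k : Fin m, padv A φ k ^ 2 = ∑ j : ↥A, φ j ^ 2 := by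
  classical
  have h1 : ∑ k : Fin m, padv A φ k ^ 2 = ∑ k ∈ A, padv A φ k ^ 2 := by
    refine (Finset.sum_subset (Finset.subset_univ A) ?_).symm
    intro k _ hk
    simp [padv, hk]
  rw [h1, ← Finset.sum_attach A (fun k => padv A φ k ^ 2)]
  refine Finset.sum_congr rfl fun j _ => ?_
  simp [padv, j.prop]

lemma norm_padv {m : ℕ} (A : Finset (Fin m)) (φ : ↥A → ℝ) :
    ‖padv A φ‖ = Real.sqrt (∑ j : ↥A, φ j ^ 2) := by
  rw [EuclideanSpace.norm_eq, ← sum_sq_padv A φ]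
  congr 1
  exact Finset.sum_congr rfl fun k _ => by rw [Real.norm_eq_abs, sq_abs]

lemma sum_abs_le_sqrt {n : ℕ} (y : Fin n → ℝ) :
    ∑ i, |y i| ≤ Real.sqrt (n * ∑ i, y i ^ 2) := by
  have h := Finset.sum_mul_sq_le_sq_mul_sq Finset.univ (fun _ => (1:ℝ)) (fun i => |y i|)
  simp only [one_mul, one_pow, Finset.sum_const, Finset.card_univ, Fintype.card_fin,
    nsmul_eq_mul, mul_one, sq_abs] at h
  have h0 : 0 ≤ ∑ i, |y i| := Finset.sum_nonneg fun i _ => abs_nonneg _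
  rw [show ∑ i, |y i| = Real.sqrt ((∑ i, |y i|) ^ 2) from (Real.sqrt_sq h0).symm]
  exact Real.sqrt_le_sqrt h

/-- the centered empirical process over a submodel -/
noncomputable def Sproc {Ω : Type*} [MeasureSpace Ω] (τ : ℝ) (ε : ℕ → Ω → ℝ) {n m : ℕ}
    (X : Fin n → EuclideanSpace ℝ (Fin m)) (A : Finset (Fin m)) (θ : ↥A → ℝ) (ω : Ω) : ℝ :=
  ∑ i : Fin n, (rho τ (ε i.val ω - ∑ j : ↥A, X i j.val * θ j) - rho τ (ε i.val ω)
    - ∫ ω', (rho τ (ε i.val ω' - ∑ j : ↥A, X i j.val * θ j) - rho τ (ε i.val ω')))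

/-- the summands, as an `ℕ`-indexed family -/
noncomputable def Yb {Ω : Type*} [MeasureSpace Ω] (τ : ℝ) (ε : ℕ → Ω → ℝ) {m : ℕ} (n : ℕ)
    (X : Fin n → EuclideanSpace ℝ (Fin m)) (A : Finset (Fin m)) (θ : ↥A → ℝ) (i : ℕ) :
    Ω → ℝ :=
  if h : i < n then
    fun ω => Gf τ (ε i ω) (xcoef X A θ ⟨i, h⟩) - ∫ ω', Gf τ (ε i ω') (xcoef X A θ ⟨i, h⟩)
  else 0

lemma Sproc_summand_eq {Ω : Type*} [MeasureSpace Ω] (τ : ℝ) (ε : ℕ → Ω → ℝ) {n m : ℕ}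
    (X : Fin n → EuclideanSpace ℝ (Fin m)) (A : Finset (Fin m)) (θ : ↥A → ℝ) (ω : Ω)
    (i : Fin n) :
    rho τ (ε i.val ω - ∑ j : ↥A, X i j.val * θ j) - rho τ (ε i.val ω)
      - ∫ ω', (rho τ (ε i.val ω' - ∑ j : ↥A, X i j.val * θ j) - rho τ (ε i.val ω'))
      = Yb τ ε n X A θ i.val ω := by
  rw [Yb, dif_pos i.isLt]
  rfl

lemma Sproc_eq_sum_range {Ω : Type*} [MeasureSpace Ω] (τ : ℝ) (ε : ℕ → Ω → ℝ) {n m : ℕ}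
    (X : Fin n → EuclideanSpace ℝ (Fin m)) (A : Finset (Fin m)) (θ : ↥A → ℝ) (ω : Ω) :
    Sproc τ ε X A θ ω = ∑ i ∈ Finset.range n, Yb τ ε n X A θ i ω := by
  rw [Sproc, ← Fin.sum_univ_eq_sum_range (fun i => Yb τ ε n X A θ i ω) n]
  exact Finset.sum_congr rfl fun i _ => Sproc_summand_eq τ ε X A θ ω i

lemma abs_Sproc_le {Ω : Type*} [MeasureSpace Ω] [IsProbabilityMeasure (ℙ : Measure Ω)]
    {τ : ℝ} (h0 : 0 ≤ τ) (h1 : τ ≤ 1) (ε : ℕ → Ω → ℝ) {n m : ℕ}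
    (X : Fin n → EuclideanSpace ℝ (Fin m)) (A : Finset (Fin m)) (θ : ↥A → ℝ) (ω : Ω) :
    |Sproc τ ε X A θ ω| ≤ 4 * ∑ i : Fin n, |xcoef X A θ i| := by
  rw [Sproc]
  refine (Finset.abs_sum_le_sum_abs _ _).trans ?_
  rw [Finset.mul_sum]
  refine Finset.sum_le_sum fun i _ => ?_
  have he : rho τ (ε i.val ω - ∑ j : ↥A, X i j.val * θ j) - rho τ (ε i.val ω)
      - ∫ ω', (rho τ (ε i.val ω' - ∑ j : ↥A, X i j.val * θ j) - rho τ (ε i.val ω'))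
      = Gf τ (ε i.val ω) (xcoef X A θ i) - ∫ ω', Gf τ (ε i.val ω') (xcoef X A θ i) := rfl
  rw [he]
  have hb1 := Gf_abs_le h0 h1 (ε i.val ω) (xcoef X A θ i)
  have hb2 := Gf_integral_abs_le (g := ε i.val) h0 h1 (xcoef X A θ i)
  calc |Gf τ (ε i.val ω) (xcoef X A θ i) - ∫ ω', Gf τ (ε i.val ω') (xcoef X A θ i)|
      ≤ |Gf τ (ε i.val ω) (xcoef X A θ i)| + |∫ ω', Gf τ (ε i.val ω') (xcoef X A θ i)| :=
        abs_sub _ _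
    _ ≤ 2 * |xcoef X A θ i| + 2 * |xcoef X A θ i| := add_le_add hb1 hb2
    _ = 4 * |xcoef X A θ i| := by ring

lemma abs_Sproc_sub_le {Ω : Type*} [MeasureSpace Ω] [IsProbabilityMeasure (ℙ : Measure Ω)]
    {τ : ℝ} (h0 : 0 ≤ τ) (h1 : τ ≤ 1) (ε : ℕ → Ω → ℝ) (hε : ∀ i, Measurable (ε i))
    {n m : ℕ} (X : Fin n → EuclideanSpace ℝ (Fin m)) (A : Finset (Fin m))
    (θ θ' : ↥A → ℝ) (ω : Ω) :
    |Sproc τ ε X A θ ω - Sproc τ ε X A θ' ω|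
      ≤ 4 * ∑ i : Fin n, |xcoef X A θ i - xcoef X A θ' i| := by
  rw [Sproc, Sproc, ← Finset.sum_sub_distrib]
  refine (Finset.abs_sum_le_sum_abs _ _).trans ?_
  rw [Finset.mul_sum]
  refine Finset.sum_le_sum fun i _ => ?_
  have he : ∀ φ : ↥A → ℝ, rho τ (ε i.val ω - ∑ j : ↥A, X i j.val * φ j) - rho τ (ε i.val ω)
      - ∫ ω', (rho τ (ε i.val ω' - ∑ j : ↥A, X i j.val * φ j) - rho τ (ε i.val ω'))
      = Gf τ (ε i.val ω) (xcoef X A φ i) - ∫ ω', Gf τ (ε i.val ω') (xcoef X A φ i) :=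
    fun φ => rfl
  rw [he θ, he θ']
  set x := xcoef X A θ i
  set x' := xcoef X A θ' i
  have hb1 := Gf_sub_abs_le h0 h1 (ε i.val ω) x x'
  have hb2 := Gf_integral_sub_abs_le (g := ε i.val) h0 h1 (hε i.val) x x'
  calc |Gf τ (ε i.val ω) x - (∫ ω', Gf τ (ε i.val ω') x)
        - (Gf τ (ε i.val ω) x' - ∫ ω', Gf τ (ε i.val ω') x')|
      = |(Gf τ (ε i.val ω) x - Gf τ (ε i.val ω) x')
        - ((∫ ω', Gf τ (ε i.val ω') x) - ∫ ω', Gf τ (ε i.val ω') x')| := by ring_nf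
    _ ≤ |Gf τ (ε i.val ω) x - Gf τ (ε i.val ω) x'|
        + |(∫ ω', Gf τ (ε i.val ω') x) - ∫ ω', Gf τ (ε i.val ω') x'| := abs_sub _ _
    _ ≤ 2 * |x - x'| + 2 * |x - x'| := add_le_add hb1 hb2
    _ = 4 * |x - x'| := by ring

lemma sum_abs_xcoef_le {n m : ℕ} {R0 : ℝ} (hR0 : 0 ≤ R0)
    (X : Fin n → EuclideanSpace ℝ (Fin m))
    (hDes : ∀ w : EuclideanSpace ℝ (Fin m), ∑ i : Fin n, ⟪X i, w⟫ ^ 2 ≤ (n:ℝ) * R0 * ‖w‖ ^ 2)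
    (A : Finset (Fin m)) (φ : ↥A → ℝ) :
    ∑ i : Fin n, |xcoef X A φ i|
      ≤ (n : ℝ) * Real.sqrt R0 * Real.sqrt (∑ j : ↥A, φ j ^ 2) := by
  have hsq : 0 ≤ ∑ j : ↥A, φ j ^ 2 := Finset.sum_nonneg fun j _ => sq_nonneg _
  have hx : ∀ i, xcoef X A φ i = ⟪X i, padv A φ⟫ := fun i => (inner_padv (X i) A φ).symm
  have hnv : ‖padv A φ‖ ^ 2 = ∑ j : ↥A, φ j ^ 2 := by
    rw [norm_padv, Real.sq_sqrt hsq]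
  calc ∑ i : Fin n, |xcoef X A φ i|
      ≤ Real.sqrt ((n:ℝ) * ∑ i : Fin n, xcoef X A φ i ^ 2) := sum_abs_le_sqrt _
    _ ≤ Real.sqrt ((n:ℝ) * ((n:ℝ) * R0 * (∑ j : ↥A, φ j ^ 2))) := by
        refine Real.sqrt_le_sqrt (mul_le_mul_of_nonneg_left ?_ (Nat.cast_nonneg n))
        rw [← hnv]
        simp_rw [hx]
        exact hDes _
    _ = (n : ℝ) * Real.sqrt R0 * Real.sqrt (∑ j : ↥A, φ j ^ 2) := by
        rw [show (n:ℝ) * ((n:ℝ) * R0 * (∑ j : ↥A, φ j ^ 2))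
            = (n:ℝ) ^ 2 * (R0 * ∑ j : ↥A, φ j ^ 2) by ring,
          Real.sqrt_mul (sq_nonneg _), Real.sqrt_sq (Nat.cast_nonneg n),
          Real.sqrt_mul hR0, mul_assoc]

lemma sqrt_sum_sq_triangle {ι : Type*} [Fintype ι] (f g : ι → ℝ) :
    Real.sqrt (∑ j, (f j + g j) ^ 2)
      ≤ Real.sqrt (∑ j, f j ^ 2) + Real.sqrt (∑ j, g j ^ 2) := by
  have h1 : ∀ x : EuclideanSpace ℝ ι, ‖x‖ = Real.sqrt (∑ j, x j ^ 2) := fun x => by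
    rw [EuclideanSpace.norm_eq]
    congr 1
    exact Finset.sum_congr rfl fun j _ => by rw [Real.norm_eq_abs, sq_abs]
  have h2 := norm_add_le (WithLp.toLp 2 f : EuclideanSpace ℝ ι) (WithLp.toLp 2 g : EuclideanSpace ℝ ι)
  rw [h1, h1, h1] at h2
  simpa [PiLp.add_apply] using h2

set_option maxHeartbeats 1600000 in
/-- uniform `O_P(n^{(1+a)/2} d_n^{1/2})` bound on the centered
empirical quantile process over all submodels of size at most `s_n = O(n^a)`
and all parameters of norm at most `δ`. -/
theorem empirical_process_uniform_bound
    {Ω : Type*} [MeasureSpace Ω] [IsProbabilityMeasure (ℙ : Measure Ω)]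
    (τ : ℝ) (hτ : τ ∈ Set.Ioo (0 : ℝ) 1)
    -- dimensions and design
    (d : ℕ → ℕ) (hd : ∀ n, 1 ≤ d n)
    (X : (n : ℕ) → Fin n → EuclideanSpace ℝ (Fin (d n)))
    -- i.i.d. errors
    (ε : ℕ → Ω → ℝ) (hmeas : ∀ i, Measurable (ε i))
    (hindep : iIndepFun ε ℙ)
    (hident : ∀ i j, IdentDistrib (ε i) (ε j) ℙ ℙ)
    -- (A2)
    (r0 R0 : ℝ) (hr0 : 0 < r0)
    (hA2 : ∀ n : ℕ, 1 ≤ n → ∀ u : EuclideanSpace ℝ (Fin (d n)),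
      r0 * ‖u‖ ^ 2 ≤ (1 / n) * ∑ i, ⟪X n i, u⟫ ^ 2 ∧
        (1 / n) * ∑ i, ⟪X n i, u⟫ ^ 2 ≤ R0 * ‖u‖ ^ 2)
    -- (A3)
    (hA3 : Tendsto (fun n => Real.sqrt (d n / n) * ⨆ i : Fin n, ‖X n i‖)
      atTop (nhds 0))
    -- s_n = O(n^a) with 0 < a < 1/2
    (s : ℕ → ℕ) (a : ℝ) (ha : a ∈ Set.Ioo (0 : ℝ) (1 / 2))
    (hs : ∃ C : ℝ, ∀ n, (s n : ℝ) ≤ C * (n : ℝ) ^ a) :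
    ∀ δ > (0 : ℝ), ∀ e > (0 : ℝ), ∃ C > (0 : ℝ), ∃ N : ℕ, ∀ n ≥ N,
      (ℙ {ω | ∃ A : Finset (Fin (d n)), A.card ≤ s n ∧
        ∃ θ : ↥A → ℝ, Real.sqrt (∑ j, θ j ^ 2) ≤ δ ∧
          C * (n : ℝ) ^ ((1 + a) / 2) * Real.sqrt (d n) ≤
            |∑ i : Fin n,
              (rho τ (ε i.val ω - ∑ j : ↥A, X n i j.val * θ j) -
                rho τ (ε i.val ω) -
                ∫ ω', (rho τ (ε i.val ω' - ∑ j : ↥A, X n i j.val * θ j) -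
                  rho τ (ε i.val ω')))|}).toReal ≤ e := by
  classical
  intro δ hδ e he
  obtain ⟨hτ0, hτ1⟩ := hτ
  obtain ⟨Cs₀, hCs₀⟩ := hs
  have hCs : ∀ k : ℕ, (s k : ℝ) ≤ (max Cs₀ 1) * (k:ℝ) ^ a := fun k =>
    (hCs₀ k).trans (mul_le_mul_of_nonneg_right (le_max_left _ _)
      (Real.rpow_nonneg (Nat.cast_nonneg k) _))
  set Cs := max Cs₀ 1 with hCs_def
  have hCs1 : (1:ℝ) ≤ Cs := le_max_right _ _
  have hR0 : 0 < R0 := by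
    obtain ⟨h1, h2⟩ := hA2 1 le_rfl (EuclideanSpace.single (⟨0, hd 1⟩ : Fin (d 1)) (1:ℝ))
    rw [EuclideanSpace.norm_single, norm_one, one_pow, mul_one] at h1 h2
    linarith
  have hsR0 : 0 < Real.sqrt R0 := Real.sqrt_pos.mpr hR0
  set c₁ : ℝ := 1 / (1024 * R0 * δ ^ 2) with hc₁_def
  have hc₁ : 0 < c₁ := by
    apply one_div_pos.mpr
    positivity
  set W : ℝ := Real.sqrt (Cs + 1) with hW_def
  have hW1 : (1:ℝ) ≤ W := by
    rw [hW_def, show (1:ℝ) = Real.sqrt 1 from Real.sqrt_one.symm]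
    exact Real.sqrt_le_sqrt (by rw [Real.sqrt_one]; linarith)
  have hW0 : (0:ℝ) < W := by linarith
  set K₇ : ℝ := 16 * δ * Real.sqrt R0 * W + 4 with hK₇_def
  have hK₇ : (4:ℝ) ≤ K₇ := le_add_of_nonneg_left (by positivity)
  -- eventual facts
  have hna : Tendsto (fun k : ℕ => (k:ℝ) ^ a) atTop atTop :=
    (tendsto_rpow_atTop ha.1).comp tendsto_natCast_atTop_atTop
  have h1ev := hna.eventually_ge_atTop (3/c₁ * (Real.log 2 - Real.log e))
  have h2ev := hna.eventually_ge_atTop (3/c₁ * Real.log 2)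
  have h3ev : ∀ᶠ k : ℕ in atTop, W * Real.log (K₇ * k) ≤ c₁/3 * (k:ℝ) ^ (a/2) := by
    have ha2 : 0 < a/2 := by linarith [ha.1]
    have hrt : Tendsto (fun x : ℝ => x ^ (a/2)) atTop atTop := tendsto_rpow_atTop ha2
    have hlo := (isLittleO_log_rpow_atTop ha2).def
      (show (0:ℝ) < c₁/(6*W) from div_pos hc₁ (by linarith))
    have hcst : ∀ᶠ x : ℝ in atTop, 6 * W * Real.log K₇ / c₁ ≤ x ^ (a/2) :=
      hrt.eventually_ge_atTop _
    have hreal : ∀ᶠ x : ℝ in atTop, W * Real.log (K₇ * x) ≤ c₁/3 * x ^ (a/2) := by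
      filter_upwards [hlo, hcst, eventually_ge_atTop (1:ℝ)] with x hx1 hx2 hx3
      have hxpos : (0:ℝ) < x := by linarith
      rw [Real.log_mul (by linarith : K₇ ≠ 0) (ne_of_gt hxpos)]
      have hrp : 0 ≤ x ^ (a/2) := Real.rpow_nonneg hxpos.le _
      have hl1 : Real.log x ≤ c₁/(6*W) * x ^ (a/2) := by
        rw [Real.norm_eq_abs, Real.norm_eq_abs, abs_of_nonneg (Real.log_nonneg hx3),
          abs_of_nonneg hrp] at hx1
        exact hx1
      have hl2 : W * Real.log K₇ ≤ c₁/6 * x ^ (a/2) := by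
        have heq : W * Real.log K₇ = c₁/6 * (6 * W * Real.log K₇ / c₁) := by
          field_simp
        rw [heq]
        exact mul_le_mul_of_nonneg_left hx2 (by positivity)
      have hl3 : W * Real.log x ≤ c₁/6 * x ^ (a/2) := by
        calc W * Real.log x ≤ W * (c₁/(6*W) * x ^ (a/2)) :=
              mul_le_mul_of_nonneg_left hl1 (by linarith)
          _ = c₁/6 * x ^ (a/2) := by
              field_simp
      calc W * (Real.log K₇ + Real.log x) = W * Real.log K₇ + W * Real.log x := by ring
        _ ≤ c₁/6 * x ^ (a/2) + c₁/6 * x ^ (a/2) := add_le_add hl2 hl3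
        _ = c₁/3 * x ^ (a/2) := by ring
    exact tendsto_natCast_atTop_atTop.eventually hreal
  obtain ⟨N₀, hN₀⟩ := Filter.eventually_atTop.mp ((h1ev.and h2ev).and h3ev)
  refine ⟨1, one_pos, max N₀ 1, fun n hn => ?_⟩
  obtain ⟨⟨hP1, hP2⟩, hP3⟩ := hN₀ n (le_trans (le_max_left _ _) hn)
  have hn1 : 1 ≤ n := le_trans (le_max_right _ _) hn
  have hn0 : (0:ℝ) < n := by exact_mod_cast hn1
  have hn0' : (1:ℝ) ≤ n := by exact_mod_cast hn1
  have hm1 : 1 ≤ d n := hd n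
  have hm0 : (1:ℝ) ≤ (d n : ℝ) := by exact_mod_cast hm1
  have hsqm : (1:ℝ) ≤ Real.sqrt (d n) := by
    rw [show (1:ℝ) = Real.sqrt 1 from Real.sqrt_one.symm]
    exact Real.sqrt_le_sqrt (by linarith)
  set t : ℝ := (n:ℝ) ^ ((1 + a)/2) * Real.sqrt (d n) with ht_def
  have hrpow_pos : (0:ℝ) < (n:ℝ) ^ ((1 + a)/2) := Real.rpow_pos_of_pos hn0 _
  have htpos : 0 < t := mul_pos hrpow_pos (by linarith)
  have hDes : ∀ w : EuclideanSpace ℝ (Fin (d n)),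
      ∑ i : Fin n, ⟪X n i, w⟫ ^ 2 ≤ (n:ℝ) * R0 * ‖w‖ ^ 2 := by
    intro w
    have h2 := (hA2 n hn1 w).2
    calc ∑ i : Fin n, ⟪X n i, w⟫ ^ 2
        = (n:ℝ) * ((1/(n:ℝ)) * ∑ i : Fin n, ⟪X n i, w⟫ ^ 2) := by
          field_simp
      _ ≤ (n:ℝ) * (R0 * ‖w‖ ^ 2) := mul_le_mul_of_nonneg_left h2 hn0.le
      _ = (n:ℝ) * R0 * ‖w‖ ^ 2 := by ring
  have hXb : ∀ (A : Finset (Fin (d n))) (φ : ↥A → ℝ),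
      ∑ i : Fin n, |xcoef (X n) A φ i| ≤ (n:ℝ) * Real.sqrt R0 * Real.sqrt (∑ j : ↥A, φ j ^ 2) :=
    sum_abs_xcoef_le hR0.le (X n) hDes
  show (ℙ {ω | ∃ A : Finset (Fin (d n)), A.card ≤ s n ∧
      ∃ θ : ↥A → ℝ, Real.sqrt (∑ j, θ j ^ 2) ≤ δ ∧
        1 * (n:ℝ) ^ ((1 + a)/2) * Real.sqrt (d n) ≤ |Sproc τ ε (X n) A θ ω|}).toReal ≤ e
  have hone : ∀ (A : Finset (Fin (d n))) (θ : ↥A → ℝ) (ω : Ω),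
      (1 * (n:ℝ) ^ ((1 + a)/2) * Real.sqrt (d n) ≤ |Sproc τ ε (X n) A θ ω|) =
      (t ≤ |Sproc τ ε (X n) A θ ω|) := by
    intro A θ ω
    rw [one_mul, ← ht_def]
  simp only [hone]
  set M : Set Ω := {ω | ∃ A : Finset (Fin (d n)), A.card ≤ s n ∧
      ∃ θ : ↥A → ℝ, Real.sqrt (∑ j, θ j ^ 2) ≤ δ ∧ t ≤ |Sproc τ ε (X n) A θ ω|} with hM_def
  by_cases hcase : 4 * (n:ℝ) * Real.sqrt R0 * δ < t
  · -- event is empty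
    have hempty : M = ∅ := by
      rw [Set.eq_empty_iff_forall_notMem]
      rintro ω ⟨A, hA, θ, hθ, hble⟩
      have hb1 : |Sproc τ ε (X n) A θ ω| ≤ 4 * ((n:ℝ) * Real.sqrt R0 * Real.sqrt (∑ j : ↥A, θ j ^ 2)) :=
        (abs_Sproc_le hτ0.le hτ1.le ε (X n) A θ ω).trans
          (by linarith [hXb A θ])
      have hb2 : 4 * ((n:ℝ) * Real.sqrt R0 * Real.sqrt (∑ j : ↥A, θ j ^ 2))
          ≤ 4 * (n:ℝ) * Real.sqrt R0 * δ := by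
        have h4 : (0:ℝ) ≤ 4 * (n:ℝ) * Real.sqrt R0 := by positivity
        calc 4 * ((n:ℝ) * Real.sqrt R0 * Real.sqrt (∑ j : ↥A, θ j ^ 2))
            = (4 * (n:ℝ) * Real.sqrt R0) * Real.sqrt (∑ j : ↥A, θ j ^ 2) := by ring
          _ ≤ (4 * (n:ℝ) * Real.sqrt R0) * δ := mul_le_mul_of_nonneg_left hθ h4
      linarith
    rw [hempty]
    simp [he.le]
  · push_neg at hcase
    -- the net
    set s'' : ℕ := max 1 (min (s n) (d n)) with hs''_def
    have hs''1 : 1 ≤ s'' := le_max_left _ _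
    have hs''0 : (1:ℝ) ≤ (s'' : ℝ) := by exact_mod_cast hs''1
    have hsqs'' : (1:ℝ) ≤ Real.sqrt s'' := by
      rw [show (1:ℝ) = Real.sqrt 1 from Real.sqrt_one.symm]
      exact Real.sqrt_le_sqrt (by linarith)
    set η : ℝ := t / (8 * (n:ℝ) * Real.sqrt R0 * Real.sqrt s'') with hη_def
    have hηpos : 0 < η := div_pos htpos (by positivity)
    set K : ℤ := ⌈δ / η⌉ with hK_def
    have hK1 : 1 ≤ K := by
      have : (0:ℤ) < K := Int.lt_ceil.mpr (by push_cast; positivity)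
      omega
    set fiber : (A : Finset (Fin (d n))) → Finset (↥A → ℤ) := fun A =>
      (Fintype.piFinset fun _ : ↥A => Finset.Icc (-(K+1)) K).filter
        (fun k => Real.sqrt (∑ j : ↥A, (η * (k j : ℝ)) ^ 2) ≤ 2 * δ) with hfiber_def
    set Net : Finset ((A : Finset (Fin (d n))) × (↥A → ℤ)) :=
      (Finset.univ.filter fun A : Finset (Fin (d n)) => A.card ≤ s n).sigma fiber with hNet_def
    have hθp : ∀ p : (A : Finset (Fin (d n))) × (↥A → ℤ), True := fun _ => trivial
    set B' : ℝ := (t/2) ^ 2 / (4 * (64 * (n:ℝ) * R0 * δ ^ 2)) with hB'_def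
    set Ev : ((A : Finset (Fin (d n))) × (↥A → ℤ)) → Set Ω := fun p =>
      {ω | t/2 ≤ |∑ i ∈ Finset.range n, Yb τ ε n (X n) p.1 (fun j => η * (p.2 j : ℝ)) i ω|}
      with hEv_def
    have hInc : M ⊆ ⋃ p ∈ Net, Ev p := by
      rintro ω ⟨A, hAcard, θ, hθ, hSb⟩
      set k : ↥A → ℤ := fun j => ⌊θ j / η⌋ with hk_def
      set θ' : ↥A → ℝ := fun j => η * (k j : ℝ) with hθ'_def
      have hsum_nonneg : (0:ℝ) ≤ ∑ j : ↥A, θ j ^ 2 :=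
        Finset.sum_nonneg fun j _ => sq_nonneg _
      have hsumle : ∑ j : ↥A, θ j ^ 2 ≤ δ ^ 2 := by
        have := pow_le_pow_left₀ (Real.sqrt_nonneg _) hθ 2
        rwa [Real.sq_sqrt hsum_nonneg] at this
      have hcoord : ∀ j : ↥A, |θ j| ≤ δ := by
        intro j
        have h1 : θ j ^ 2 ≤ δ ^ 2 :=
          le_trans (Finset.single_le_sum (fun j _ => sq_nonneg (θ j))
            (Finset.mem_univ j)) hsumle
        calc |θ j| = Real.sqrt (θ j ^ 2) := (Real.sqrt_sq_eq_abs _).symm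
          _ ≤ Real.sqrt (δ ^ 2) := Real.sqrt_le_sqrt h1
          _ = δ := Real.sqrt_sq hδ.le
      have hfl1 : ∀ j : ↥A, η * (k j : ℝ) ≤ θ j := by
        intro j
        have h := Int.floor_le (θ j / η)
        calc η * (k j:ℝ) ≤ η * (θ j / η) := by
              refine mul_le_mul_of_nonneg_left ?_ hηpos.le
              simpa [hk_def] using h
          _ = θ j := by field_simp
      have hfl2 : ∀ j : ↥A, θ j - η < η * (k j:ℝ) := by
        intro j
        have h := Int.sub_one_lt_floor (θ j / η)
        have h3 : η * (θ j / η - 1) < η * (k j:ℝ) := by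
          refine mul_lt_mul_of_pos_left ?_ hηpos
          simpa [hk_def] using h
        calc θ j - η = η * (θ j / η - 1) := by field_simp
          _ < η * (k j:ℝ) := h3
      have hround : ∀ j : ↥A, |θ j - θ' j| ≤ η := by
        intro j
        simp only [hθ'_def]
        rw [abs_le]
        exact ⟨by linarith [hfl1 j, hfl2 j], by linarith [hfl1 j, hfl2 j]⟩
      have hKr : δ / η ≤ (K:ℝ) := by
        rw [hK_def]
        exact Int.le_ceil _
      have hkIcc : ∀ j : ↥A, k j ∈ Finset.Icc (-(K+1)) K := by
        intro j
        rw [Finset.mem_Icc]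
        have hd1 := (abs_le.mp (hcoord j)).1
        have hd2 := (abs_le.mp (hcoord j)).2
        constructor
        · have hgoal : ((-(K+1) : ℤ) : ℝ) ≤ θ j / η := by
            push_cast
            have h3 : (-δ)/η ≤ θ j / η := (div_le_div_iff_of_pos_right hηpos).mpr hd1
            have h4 : (-δ)/η = -(δ/η) := neg_div _ _
            linarith
          simpa [hk_def] using Int.le_floor.mpr hgoal
        · have h5 : θ j / η ≤ δ / η := (div_le_div_iff_of_pos_right hηpos).mpr hd2
          have h6 : ⌊θ j / η⌋ ≤ ⌊δ / η⌋ := Int.floor_le_floor h5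
          have h7 : ⌊δ / η⌋ ≤ ⌈δ / η⌉ := Int.floor_le_ceil _
          simp only [hk_def, hK_def]
          omega
      have hcard : A.card ≤ s'' := by
        have h1 : A.card ≤ d n := by simpa using Finset.card_le_univ A
        omega
      have hdiffnorm : Real.sqrt (∑ j : ↥A, (θ j - θ' j) ^ 2) ≤ η * Real.sqrt s'' := by
        have h1 : ∑ j : ↥A, (θ j - θ' j) ^ 2 ≤ (s'':ℝ) * η ^ 2 := by
          calc ∑ j : ↥A, (θ j - θ' j) ^ 2 ≤ ∑ _j : ↥A, η ^ 2 := by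
                refine Finset.sum_le_sum fun j _ => ?_
                rw [← sq_abs]
                exact pow_le_pow_left₀ (abs_nonneg _) (hround j) 2
            _ = (A.card : ℝ) * η ^ 2 := by
                rw [Finset.sum_const, Finset.card_univ, Fintype.card_coe, nsmul_eq_mul]
            _ ≤ (s'':ℝ) * η ^ 2 := by
                have h2 : (A.card:ℝ) ≤ (s'':ℝ) := by exact_mod_cast hcard
                nlinarith [sq_nonneg η]
        calc Real.sqrt (∑ j : ↥A, (θ j - θ' j) ^ 2)
            ≤ Real.sqrt ((s'':ℝ) * η ^ 2) := Real.sqrt_le_sqrt h1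
          _ = η * Real.sqrt s'' := by
            rw [Real.sqrt_mul (by positivity), Real.sqrt_sq hηpos.le]
            ring
      have hηs : η * Real.sqrt s'' = t / (8 * (n:ℝ) * Real.sqrt R0) := by
        rw [hη_def]
        have hne : Real.sqrt (s'':ℝ) ≠ 0 := by positivity
        field_simp
      have hη2δ : η * Real.sqrt s'' ≤ δ / 2 := by
        rw [hηs, div_le_iff₀ (by positivity)]
        nlinarith [hcase]
      have hθ'norm : Real.sqrt (∑ j : ↥A, (η * (k j:ℝ)) ^ 2) ≤ 2 * δ := by
        have htri := sqrt_sum_sq_triangle (fun j : ↥A => θ j)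
          (fun j : ↥A => η * (k j:ℝ) - θ j)
        have hsg : ∀ j : ↥A, θ j + (η * (k j:ℝ) - θ j) = η * (k j:ℝ) := fun j => by ring
        simp only [hsg] at htri
        have heq2 : ∑ j : ↥A, (η * (k j:ℝ) - θ j) ^ 2 = ∑ j : ↥A, (θ j - θ' j) ^ 2 := by
          refine Finset.sum_congr rfl fun j _ => ?_
          simp only [hθ'_def]
          ring
        rw [heq2] at htri
        have := hdiffnorm
        linarith [htri, hθ, hη2δ]
      have ht2 : t/2 ≤ |Sproc τ ε (X n) A θ' ω| := by
        have hd1 := abs_Sproc_sub_le hτ0.le hτ1.le ε hmeas (X n) A θ θ' ω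
        have hd2 : ∑ i : Fin n, |xcoef (X n) A θ i - xcoef (X n) A θ' i|
            ≤ (n:ℝ) * Real.sqrt R0 * (η * Real.sqrt s'') := by
          have h5 : ∑ i : Fin n, |xcoef (X n) A θ i - xcoef (X n) A θ' i|
              = ∑ i : Fin n, |xcoef (X n) A (fun j => θ j - θ' j) i| := by
            refine Finset.sum_congr rfl fun i _ => ?_
            rw [xcoef_sub]
          rw [h5]
          refine (hXb A (fun j => θ j - θ' j)).trans ?_
          exact mul_le_mul_of_nonneg_left hdiffnorm (by positivity)
        have hd3 : |Sproc τ ε (X n) A θ ω - Sproc τ ε (X n) A θ' ω| ≤ t/2 := by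
          refine hd1.trans ?_
          calc 4 * ∑ i : Fin n, |xcoef (X n) A θ i - xcoef (X n) A θ' i|
              ≤ 4 * ((n:ℝ) * Real.sqrt R0 * (η * Real.sqrt s'')) := by linarith
            _ = 4 * ((n:ℝ) * Real.sqrt R0 * (t / (8 * (n:ℝ) * Real.sqrt R0))) := by
                rw [hηs]
            _ = t/2 := by
                field_simp
                ring
        have habs := abs_sub_abs_le_abs_sub (Sproc τ ε (X n) A θ ω)
          (Sproc τ ε (X n) A θ' ω)
        linarith [hSb, hd3, habs]
      refine Set.mem_iUnion₂.mpr ⟨⟨A, k⟩, ?_, ?_⟩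
      · rw [hNet_def]
        refine Finset.mem_sigma.mpr ⟨Finset.mem_filter.mpr ⟨Finset.mem_univ _, hAcard⟩, ?_⟩
        simp only [hfiber_def]
        exact Finset.mem_filter.mpr ⟨Fintype.mem_piFinset.mpr hkIcc, hθ'norm⟩
      · have hEvEq : Ev ⟨A, k⟩ = {ω' | t/2 ≤ |Sproc τ ε (X n) A θ' ω'|} := by
          simp only [hEv_def, hθ'_def]
          ext ω'
          simp only [Set.mem_setOf_eq, Sproc_eq_sum_range]
        rw [hEvEq]
        exact ht2
    have hEvBound : ∀ p ∈ Net, ℙ (Ev p) ≤ ENNReal.ofReal (2 * Real.exp (-B')) := by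
      intro p hp
      obtain ⟨hpA, hpk⟩ := Finset.mem_sigma.mp hp
      have hpk2 : Real.sqrt (∑ j : ↥p.1, (η * (p.2 j : ℝ)) ^ 2) ≤ 2 * δ := by
        have := Finset.mem_filter.mp (by simpa only [hfiber_def] using hpk)
        exact this.2
      set θ' : ↥p.1 → ℝ := fun j => η * (p.2 j : ℝ) with hθ'_def
      set c : ℕ → ℝ := fun i =>
        if h : i < n then 4 * |xcoef (X n) p.1 θ' ⟨i, h⟩| else 0 with hc_def
      have hYm : ∀ i, Measurable (Yb τ ε n (X n) p.1 θ' i) := by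
        intro i
        rw [Yb]
        split_ifs with h
        · exact ((Gf_meas τ _).comp (hmeas i)).sub_const _
        · exact measurable_const
      have hYindep : iIndepFun (Yb τ ε n (X n) p.1 θ') ℙ := by
        have hYeq : Yb τ ε n (X n) p.1 θ' = fun i => (fun r =>
            if h : i < n then Gf τ r (xcoef (X n) p.1 θ' ⟨i, h⟩)
              - ∫ ω', Gf τ (ε i ω') (xcoef (X n) p.1 θ' ⟨i, h⟩) else 0) ∘ ε i := by
          funext i
          rw [Yb]
          by_cases h : i < n
          · simp only [dif_pos h]
            rfl
          · simp only [dif_neg h]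
            rfl
        rw [hYeq]
        refine hindep.comp _ fun i => ?_
        by_cases h : i < n
        · simp only [dif_pos h]
          exact (Gf_meas τ _).sub_const _
        · simp only [dif_neg h]
          exact measurable_const
      have hYb : ∀ i ω, |Yb τ ε n (X n) p.1 θ' i ω| ≤ c i := by
        intro i ω
        rw [Yb]
        simp only [hc_def]
        split_ifs with h
        · calc |Gf τ (ε i ω) (xcoef (X n) p.1 θ' ⟨i, h⟩)
              - ∫ ω', Gf τ (ε i ω') (xcoef (X n) p.1 θ' ⟨i, h⟩)|
              ≤ |Gf τ (ε i ω) (xcoef (X n) p.1 θ' ⟨i, h⟩)|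
                + |∫ ω', Gf τ (ε i ω') (xcoef (X n) p.1 θ' ⟨i, h⟩)| := abs_sub _ _
            _ ≤ 2 * |xcoef (X n) p.1 θ' ⟨i, h⟩| + 2 * |xcoef (X n) p.1 θ' ⟨i, h⟩| :=
                add_le_add (Gf_abs_le hτ0.le hτ1.le _ _)
                  (Gf_integral_abs_le hτ0.le hτ1.le _)
            _ = 4 * |xcoef (X n) p.1 θ' ⟨i, h⟩| := by ring
        · simp
      have hY0 : ∀ i, (∫ ω, Yb τ ε n (X n) p.1 θ' i ω) = 0 := by
        intro i
        rw [Yb]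
        split_ifs with h
        · rw [integral_sub (Gf_integrable hτ0.le hτ1.le (hmeas i) _) (integrable_const _),
            integral_const, probReal_univ, one_smul, sub_self]
        · simp
      have hVle : ∑ i ∈ Finset.range n, c i ^ 2 ≤ 64 * (n:ℝ) * R0 * δ ^ 2 := by
        have h1 : ∑ i ∈ Finset.range n, c i ^ 2
            = ∑ i : Fin n, (4 * |xcoef (X n) p.1 θ' i|) ^ 2 := by
          rw [← Fin.sum_univ_eq_sum_range (fun i => c i ^ 2) n]
          refine Finset.sum_congr rfl fun i _ => ?_
          simp only [hc_def, dif_pos i.isLt, Fin.eta]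
        have h3 : ∑ i : Fin n, (xcoef (X n) p.1 θ' i) ^ 2 ≤ (n:ℝ) * R0 * (2*δ) ^ 2 := by
          have hx : ∀ i : Fin n, xcoef (X n) p.1 θ' i = ⟪X n i, padv p.1 θ'⟫ :=
            fun i => (inner_padv _ _ _).symm
          have hnrm : ‖padv p.1 θ'‖ ^ 2 ≤ (2*δ) ^ 2 := by
            rw [norm_padv]
            exact pow_le_pow_left₀ (Real.sqrt_nonneg _) hpk2 2
          calc ∑ i : Fin n, (xcoef (X n) p.1 θ' i) ^ 2
              = ∑ i : Fin n, ⟪X n i, padv p.1 θ'⟫ ^ 2 := by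
                exact Finset.sum_congr rfl fun i _ => by rw [hx i]
            _ ≤ (n:ℝ) * R0 * ‖padv p.1 θ'‖ ^ 2 := hDes _
            _ ≤ (n:ℝ) * R0 * (2*δ) ^ 2 := by
                refine mul_le_mul_of_nonneg_left hnrm (by positivity)
        calc ∑ i ∈ Finset.range n, c i ^ 2
            = 16 * ∑ i : Fin n, (xcoef (X n) p.1 θ' i) ^ 2 := by
              rw [h1, Finset.mul_sum]
              refine Finset.sum_congr rfl fun i _ => ?_
              rw [mul_pow, sq_abs]
              norm_num
          _ ≤ 16 * ((n:ℝ) * R0 * (2*δ) ^ 2) := by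
              refine mul_le_mul_of_nonneg_left h3 (by norm_num)
          _ = 64 * (n:ℝ) * R0 * δ ^ 2 := by ring
      have happ := hoeffding_abs (Yb τ ε n (X n) p.1 θ') hYm hYindep c hYb hY0 n (t/2)
        (64 * (n:ℝ) * R0 * δ ^ 2) (by positivity) (by positivity) hVle
      have hEset : Ev p = {ω | t/2 ≤ |∑ i ∈ Finset.range n, Yb τ ε n (X n) p.1 θ' i ω|} := by
        rw [hEv_def]
      have hBeq : -B' = -(t/2) ^ 2 / (4 * (64 * (n:ℝ) * R0 * δ ^ 2)) := by
        rw [hB'_def]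
        ring
      rw [hEset, hBeq]
      exact happ
    set Gn : ℕ := (2*K+2).toNat with hGn_def
    have hGn1 : 1 ≤ Gn := by rw [hGn_def]; omega
    have hGn0 : (0:ℝ) < (Gn:ℝ) := by exact_mod_cast hGn1
    have hic : (Finset.Icc (-(K+1)) K).card = Gn := by
      rw [Int.card_Icc, hGn_def]; congr 1; ring
    have hCount : (Net.card : ℝ) ≤ 2 ^ (d n) * (Gn : ℝ) ^ s'' := by
      have hnat : Net.card ≤ 2 ^ (d n) * Gn ^ s'' := by
        rw [hNet_def, Finset.card_sigma]
        have hfib : ∀ A ∈ (Finset.univ.filter fun A : Finset (Fin (d n)) => A.card ≤ s n),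
            (fiber A).card ≤ Gn ^ s'' := by
          intro A hA
          have h1 : (fiber A).card ≤ Gn ^ A.card := by
            simp only [hfiber_def]
            refine (Finset.card_filter_le _ _).trans ?_
            rw [Fintype.card_piFinset]
            simp only [hic]
            rw [Finset.prod_const, Finset.card_univ, Fintype.card_coe]
          refine h1.trans (Nat.pow_le_pow_right hGn1 ?_)
          have hA1 : A.card ≤ s n := (Finset.mem_filter.mp hA).2
          have hA2' : A.card ≤ d n := by
            simpa using Finset.card_le_univ A
          omega
        calc ∑ A ∈ (Finset.univ.filter fun A : Finset (Fin (d n)) => A.card ≤ s n),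
              (fiber A).card
            ≤ (Finset.univ.filter fun A : Finset (Fin (d n)) => A.card ≤ s n).card
              * Gn ^ s'' := by
              simpa [smul_eq_mul] using Finset.sum_le_card_nsmul _ _ _ hfib
          _ ≤ 2 ^ (d n) * Gn ^ s'' := by
              refine Nat.mul_le_mul_right _ ?_
              refine (Finset.card_filter_le _ _).trans ?_
              rw [Finset.card_univ, Fintype.card_finset, Fintype.card_fin]
      calc (Net.card:ℝ) ≤ ((2 ^ (d n) * Gn ^ s'' : ℕ):ℝ) := Nat.cast_le.mpr hnat
        _ = 2 ^ (d n) * (Gn:ℝ) ^ s'' := by push_cast; ring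
    have hNumeric : (2:ℝ) ^ (d n) * (Gn : ℝ) ^ s'' * (2 * Real.exp (-B')) ≤ e := by
      have hna1 : (1:ℝ) ≤ (n:ℝ) ^ a := by
        calc (1:ℝ) = 1 ^ a := (Real.one_rpow a).symm
          _ ≤ (n:ℝ) ^ a := Real.rpow_le_rpow (by norm_num) hn0' ha.1.le
      have hB'eq : B' = c₁ * ((n:ℝ) ^ a * (d n : ℝ)) := by
        have hsq1 : ((n:ℝ) ^ ((1+a)/2)) ^ 2 = (n:ℝ) ^ ((1:ℝ)+a) := by
          rw [← Real.rpow_natCast ((n:ℝ) ^ ((1+a)/2)) 2, ← Real.rpow_mul hn0.le]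
          norm_num
        have hsq2 : (Real.sqrt (d n)) ^ 2 = (d n : ℝ) := Real.sq_sqrt (by positivity)
        have hsplit : (n:ℝ) ^ ((1:ℝ)+a) = (n:ℝ) * (n:ℝ) ^ a := by
          rw [Real.rpow_add hn0, Real.rpow_one]
        have h1 : (t/2) ^ 2 = (n:ℝ) * (n:ℝ) ^ a * (d n) / 4 := by
          rw [ht_def, div_pow, mul_pow, hsq1, hsq2, hsplit]
          norm_num
        rw [hB'_def, hc₁_def, h1]
        field_simp
        ring
      have hsqs''le : Real.sqrt s'' ≤ W * (n:ℝ) ^ (a/2) := by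
        have h2 : s'' ≤ s n + 1 := by omega
        have h3 : (s'':ℝ) ≤ (s n : ℝ) + 1 := by exact_mod_cast h2
        have h1 : (s'' : ℝ) ≤ (Cs + 1) * (n:ℝ) ^ a := by
          calc (s'':ℝ) ≤ (s n : ℝ) + 1 := h3
            _ ≤ Cs * (n:ℝ) ^ a + (n:ℝ) ^ a := add_le_add (hCs n) hna1
            _ = (Cs + 1) * (n:ℝ) ^ a := by ring
        have hhalf : Real.sqrt ((n:ℝ) ^ a) = (n:ℝ) ^ (a/2) := by
          rw [Real.sqrt_eq_rpow, ← Real.rpow_mul hn0.le]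
          congr 1
          ring
        calc Real.sqrt s'' ≤ Real.sqrt ((Cs+1) * (n:ℝ) ^ a) := Real.sqrt_le_sqrt h1
          _ = W * (n:ℝ) ^ (a/2) := by
            rw [Real.sqrt_mul (by linarith : (0:ℝ) ≤ Cs+1), hW_def, hhalf]
      have hs''le : (s'':ℝ) ≤ W * (n:ℝ) ^ (a/2) * Real.sqrt (d n) := by
        have h0 : (s'':ℝ) = Real.sqrt s'' * Real.sqrt s'' :=
          (Real.mul_self_sqrt (by positivity : (0:ℝ) ≤ (s'':ℝ))).symm
        have h4 : Real.sqrt s'' ≤ Real.sqrt (d n) := by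
          refine Real.sqrt_le_sqrt ?_
          have : s'' ≤ d n := by omega
          exact_mod_cast this
        rw [h0]
        calc Real.sqrt s'' * Real.sqrt s''
            ≤ (W * (n:ℝ) ^ (a/2)) * Real.sqrt (d n) :=
              mul_le_mul hsqs''le h4 (Real.sqrt_nonneg _) (by positivity)
          _ = W * (n:ℝ) ^ (a/2) * Real.sqrt (d n) := by ring
      have hδη : δ / η ≤ 8 * δ * Real.sqrt R0 * W * (n:ℝ) := by
        have hnum : δ * (8 * (n:ℝ) * Real.sqrt R0 * Real.sqrt s'')
            ≤ δ * (8 * (n:ℝ) * Real.sqrt R0 * (W * (n:ℝ) ^ (a/2))) := by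
          have := mul_le_mul_of_nonneg_left hsqs''le
            (by positivity : (0:ℝ) ≤ 8 * (n:ℝ) * Real.sqrt R0)
          nlinarith [hδ.le]
        have htlow : (n:ℝ) ^ ((1+a)/2) ≤ t := by
          rw [ht_def]
          nlinarith [hrpow_pos, hsqm]
        have hx : (n:ℝ) * (n:ℝ) ^ (a/2) / (n:ℝ) ^ ((1+a)/2) = (n:ℝ) ^ ((1:ℝ)/2) := by
          rw [show (n:ℝ) * (n:ℝ) ^ (a/2) = (n:ℝ) ^ (1:ℝ) * (n:ℝ) ^ (a/2) by
              rw [Real.rpow_one],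
            ← Real.rpow_add hn0, ← Real.rpow_sub hn0]
          congr 1
          ring
        have hhalfle : (n:ℝ) ^ ((1:ℝ)/2) ≤ (n:ℝ) := by
          calc (n:ℝ) ^ ((1:ℝ)/2) ≤ (n:ℝ) ^ (1:ℝ) :=
              Real.rpow_le_rpow_of_exponent_le hn0' (by norm_num)
            _ = (n:ℝ) := Real.rpow_one _
        calc δ / η = δ * (8 * (n:ℝ) * Real.sqrt R0 * Real.sqrt s'') / t := by
              rw [hη_def, div_div_eq_mul_div]
          _ ≤ δ * (8 * (n:ℝ) * Real.sqrt R0 * (W * (n:ℝ) ^ (a/2))) / (n:ℝ) ^ ((1+a)/2) :=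
              div_le_div₀ (by positivity) hnum hrpow_pos htlow
          _ = 8 * δ * Real.sqrt R0 * W * ((n:ℝ) * (n:ℝ) ^ (a/2) / (n:ℝ) ^ ((1+a)/2)) := by
              ring
          _ = 8 * δ * Real.sqrt R0 * W * (n:ℝ) ^ ((1:ℝ)/2) := by rw [hx]
          _ ≤ 8 * δ * Real.sqrt R0 * W * (n:ℝ) :=
              mul_le_mul_of_nonneg_left hhalfle (by positivity)
      have hGnle : (Gn:ℝ) ≤ K₇ * n := by
        have hgn : (Gn:ℝ) = 2*(K:ℝ) + 2 := by
          have h2 : ((2*K+2).toNat : ℤ) = 2*K+2 := Int.toNat_of_nonneg (by omega)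
          rw [hGn_def]
          rw [show ((((2*K+2).toNat : ℕ)):ℝ) = (((2*K+2).toNat : ℤ) : ℝ) by push_cast; ring,
            h2]
          push_cast
          ring
        have hKle : (K:ℝ) ≤ δ/η + 1 := by
          rw [hK_def]
          exact (Int.ceil_lt_add_one _).le
        calc (Gn:ℝ) = 2*(K:ℝ)+2 := hgn
          _ ≤ 2*(δ/η + 1) + 2 := by linarith
          _ ≤ 2*(8 * δ * Real.sqrt R0 * W * (n:ℝ) + 1) + 2 := by linarith [hδη]
          _ = 16 * δ * Real.sqrt R0 * W * (n:ℝ) + 4 := by ring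
          _ ≤ 16 * δ * Real.sqrt R0 * W * (n:ℝ) + 4 * n := by linarith [hn0']
          _ = K₇ * n := by rw [hK₇_def]; ring
      have hthird : ∀ L : ℝ, 3/c₁ * L ≤ (n:ℝ) ^ a → L ≤ c₁/3 * (n:ℝ) ^ a := by
        intro L hL
        calc L = c₁/3 * (3/c₁ * L) := by field_simp
          _ ≤ c₁/3 * (n:ℝ) ^ a := mul_le_mul_of_nonneg_left hL (by positivity)
      have hi : (d n : ℝ) * Real.log 2 ≤ c₁/3 * ((n:ℝ) ^ a * d n) := by
        have h := hthird _ hP2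
        calc (d n:ℝ) * Real.log 2 ≤ (d n:ℝ) * (c₁/3 * (n:ℝ) ^ a) :=
            mul_le_mul_of_nonneg_left h (by positivity)
          _ = c₁/3 * ((n:ℝ) ^ a * d n) := by ring
      have hiii : Real.log 2 - Real.log e ≤ c₁/3 * ((n:ℝ) ^ a * d n) := by
        have h := hthird _ hP1
        have h2 : c₁/3 * (n:ℝ) ^ a ≤ c₁/3 * ((n:ℝ) ^ a * d n) := by
          have h3 : (n:ℝ) ^ a ≤ (n:ℝ) ^ a * d n := le_mul_of_one_le_right (by positivity) hm0
          exact mul_le_mul_of_nonneg_left h3 (by positivity)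
        linarith
      have hsm : Real.sqrt (d n) ≤ (d n:ℝ) := by
        nlinarith [Real.sq_sqrt (show (0:ℝ) ≤ (d n:ℝ) by positivity), hsqm,
          Real.sqrt_nonneg ((d n:ℝ))]
      have hii : (s'':ℝ) * Real.log Gn ≤ c₁/3 * ((n:ℝ) ^ a * d n) := by
        have hlog0 : 0 ≤ Real.log (Gn:ℝ) := Real.log_nonneg (by exact_mod_cast hGn1)
        have hlogle : Real.log (Gn:ℝ) ≤ Real.log (K₇ * n) := Real.log_le_log hGn0 hGnle
        have haa : (n:ℝ) ^ (a/2) * (n:ℝ) ^ (a/2) = (n:ℝ) ^ a := by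
          rw [← Real.rpow_add hn0]
          norm_num
        calc (s'':ℝ) * Real.log Gn
            ≤ (W * (n:ℝ) ^ (a/2) * Real.sqrt (d n)) * Real.log (K₇*n) :=
              mul_le_mul hs''le hlogle hlog0 (by positivity)
          _ = ((n:ℝ) ^ (a/2) * Real.sqrt (d n)) * (W * Real.log (K₇*n)) := by ring
          _ ≤ ((n:ℝ) ^ (a/2) * Real.sqrt (d n)) * (c₁/3 * (n:ℝ) ^ (a/2)) :=
              mul_le_mul_of_nonneg_left hP3 (by positivity)
          _ = c₁/3 * (((n:ℝ) ^ (a/2) * (n:ℝ) ^ (a/2)) * Real.sqrt (d n)) := by ring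
          _ = c₁/3 * ((n:ℝ) ^ a * Real.sqrt (d n)) := by rw [haa]
          _ ≤ c₁/3 * ((n:ℝ) ^ a * d n) := by
              refine mul_le_mul_of_nonneg_left ?_ (by positivity)
              exact mul_le_mul_of_nonneg_left hsm (by positivity)
      have hsum : (d n:ℝ) * Real.log 2 + (s'':ℝ) * Real.log Gn + Real.log 2 - B'
          ≤ Real.log e := by
        rw [hB'eq]
        have : c₁ * ((n:ℝ) ^ a * d n) = c₁/3 * ((n:ℝ) ^ a * d n) + c₁/3 * ((n:ℝ) ^ a * d n)
            + c₁/3 * ((n:ℝ) ^ a * d n) := by ring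
        linarith [hi, hii, hiii]
      have hexp2 : (2:ℝ) ^ (d n) = Real.exp ((d n:ℝ) * Real.log 2) := by
        rw [← Real.log_pow, Real.exp_log (by positivity)]
      have hexpG : (Gn:ℝ) ^ s'' = Real.exp ((s'':ℝ) * Real.log Gn) := by
        rw [← Real.log_pow, Real.exp_log (pow_pos hGn0 s'')]
      calc (2:ℝ) ^ (d n) * (Gn:ℝ) ^ s'' * (2*Real.exp (-B'))
          = Real.exp ((d n:ℝ) * Real.log 2) * Real.exp ((s'':ℝ) * Real.log Gn)
            * (Real.exp (Real.log 2) * Real.exp (-B')) := by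
            rw [hexp2, hexpG, Real.exp_log two_pos]
        _ = Real.exp ((d n:ℝ) * Real.log 2 + (s'':ℝ) * Real.log Gn
            + (Real.log 2 + -B')) := by
            simp only [← Real.exp_add]
        _ ≤ Real.exp (Real.log e) := Real.exp_le_exp.mpr (by linarith [hsum])
        _ = e := Real.exp_log he
    -- assembly
    have hMle : ℙ M ≤ ENNReal.ofReal ((Net.card : ℝ) * (2 * Real.exp (-B'))) := by
      calc ℙ M ≤ ℙ (⋃ p ∈ Net, Ev p) := measure_mono hInc
        _ ≤ ∑ p ∈ Net, ℙ (Ev p) := measure_biUnion_finset_le _ _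
        _ ≤ ∑ _p ∈ Net, ENNReal.ofReal (2 * Real.exp (-B')) := Finset.sum_le_sum hEvBound
        _ = Net.card • ENNReal.ofReal (2 * Real.exp (-B')) := by
            rw [Finset.sum_const]
        _ = ENNReal.ofReal ((Net.card : ℝ) * (2 * Real.exp (-B'))) := by
            rw [nsmul_eq_mul, ← ENNReal.ofReal_natCast,
              ← ENNReal.ofReal_mul (Nat.cast_nonneg _)]
    have hfinal : (Net.card : ℝ) * (2 * Real.exp (-B')) ≤ e := by
      calc (Net.card : ℝ) * (2 * Real.exp (-B'))
          ≤ (2 ^ (d n) * (Gn : ℝ) ^ s'') * (2 * Real.exp (-B')) :=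
            mul_le_mul_of_nonneg_right hCount (by positivity)
        _ ≤ e := hNumeric
    exact ENNReal.toReal_le_of_le_ofReal he.le
      (hMle.trans (ENNReal.ofReal_le_ofReal hfinal))
end

section
/- Knight's identity: for every τ ∈ (0,1) and all x, y ∈ ℝ, with ρ_τ(u) = u(τ − 1_{u<0}), one has ρ_τ(x − y) − ρ_τ(x) = y(1_{x≤0} − τ) + ∫₀^y (1_{x≤t} − 1_{x≤0}) dt. -/
lemma step_mono (x : ℝ) : Monotone (fun t : ℝ => if x ≤ t then (1:ℝ) else 0) := by
  intro s t hst
  by_cases h : x ≤ s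
  · simp [h, le_trans h hst]
  · by_cases h' : x ≤ t <;> simp [h, h']

lemma step_intble (x a b : ℝ) :
    IntervalIntegrable (fun t : ℝ => if x ≤ t then (1:ℝ) else 0) MeasureTheory.volume a b :=
  (step_mono x).intervalIntegrable

lemma ae_ne_real (x : ℝ) : ∀ᵐ t : ℝ, t ≠ x := by
  rw [MeasureTheory.ae_iff]
  simpa using MeasureTheory.measure_singleton (μ := (MeasureTheory.volume : MeasureTheory.Measure ℝ)) x

lemma step_integral_le (x a b : ℝ) (hab : a ≤ b) :
    ∫ t in a..b, (if x ≤ t then (1:ℝ) else 0) = max (b - x) 0 - max (a - x) 0 := by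
  rcases le_total b x with hbx | hxb
  · have h0 : ∫ t in a..b, (if x ≤ t then (1:ℝ) else 0) = ∫ _t in a..b, (0:ℝ) := by
      apply intervalIntegral.integral_congr_ae
      filter_upwards [ae_ne_real x] with t ht hmem
      rw [Set.uIoc_of_le hab] at hmem
      have : t < x := lt_of_le_of_ne (le_trans hmem.2 hbx) ht
      simp [not_le.mpr this]
    rw [h0]
    simp [max_eq_right (by linarith : b - x ≤ 0), max_eq_right (by linarith : a - x ≤ 0)]
  · rcases le_total x a with hxa | hax
    · have h0 : ∫ t in a..b, (if x ≤ t then (1:ℝ) else 0) = ∫ _t in a..b, (1:ℝ) := by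
        apply intervalIntegral.integral_congr
        intro t ht
        rw [Set.uIcc_of_le hab] at ht
        simp [le_trans hxa ht.1]
      rw [h0, intervalIntegral.integral_const]
      rw [max_eq_left (by linarith : (0:ℝ) ≤ b - x), max_eq_left (by linarith : (0:ℝ) ≤ a - x)]
      simp only [smul_eq_mul, mul_one]
      ring
    · have hsplit := intervalIntegral.integral_add_adjacent_intervals
        (step_intble x a x) (step_intble x x b)
      have h1 : ∫ t in a..x, (if x ≤ t then (1:ℝ) else 0) = 0 := by
        have : ∫ t in a..x, (if x ≤ t then (1:ℝ) else 0) = ∫ _t in a..x, (0:ℝ) := by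
          apply intervalIntegral.integral_congr_ae
          filter_upwards [ae_ne_real x] with t ht hmem
          rw [Set.uIoc_of_le hax] at hmem
          have : t < x := lt_of_le_of_ne hmem.2 ht
          simp [not_le.mpr this]
        simp [this]
      have h2 : ∫ t in x..b, (if x ≤ t then (1:ℝ) else 0) = b - x := by
        have : ∫ t in x..b, (if x ≤ t then (1:ℝ) else 0) = ∫ _t in x..b, (1:ℝ) := by
          apply intervalIntegral.integral_congr
          intro t ht
          rw [Set.uIcc_of_le hxb] at ht
          simp [ht.1]
        simp [this]
      rw [← hsplit, h1, h2]
      rw [max_eq_left (by linarith : (0:ℝ) ≤ b - x), max_eq_right (by linarith : a - x ≤ 0)]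
      ring

lemma step_integral (x a b : ℝ) :
    ∫ t in a..b, (if x ≤ t then (1:ℝ) else 0) = max (b - x) 0 - max (a - x) 0 := by
  rcases le_total a b with hab | hba
  · exact step_integral_le x a b hab
  · rw [intervalIntegral.integral_symm, step_integral_le x b a hba]
    ring

/-- Knight's identity. -/
theorem knight_identity (τ : ℝ) (hτ : τ ∈ Set.Ioo (0 : ℝ) 1) (x y : ℝ) :
    rho τ (x - y) - rho τ x =
      y * ((if x ≤ 0 then (1 : ℝ) else 0) - τ) +
        ∫ t in (0 : ℝ)..y,
          ((if x ≤ t then (1 : ℝ) else 0) - if x ≤ 0 then (1 : ℝ) else 0) := by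
  have hsub : (∫ t in (0 : ℝ)..y,
      ((if x ≤ t then (1 : ℝ) else 0) - if x ≤ 0 then (1 : ℝ) else 0))
      = (∫ t in (0:ℝ)..y, (if x ≤ t then (1:ℝ) else 0))
        - (∫ _t in (0:ℝ)..y, (if x ≤ 0 then (1:ℝ) else 0)) := by
    exact intervalIntegral.integral_sub (step_intble x 0 y) intervalIntegrable_const
  rw [hsub, step_integral, intervalIntegral.integral_const]
  have hmax1 : max (y - x) 0 = if x - y < 0 then y - x else 0 := by
    split_ifs with h
    · exact max_eq_left (by linarith)
    · exact max_eq_right (by linarith)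
  have hmax2 : max (0 - x) 0 = if x < 0 then 0 - x else 0 := by
    split_ifs with h
    · exact max_eq_left (by linarith)
    · exact max_eq_right (by linarith)
  rw [hmax1, hmax2, rho, rho]
  simp only [smul_eq_mul]
  split_ifs <;> first | ring | linarith
end

section
/- For every τ ∈ (0,1) and all x, y ∈ ℝ, the linearization remainder of the check function satisfies | ρ_τ(x − y) − ρ_τ(x) − y(1_{x≤0} − τ) | ≤ |y| · 1_{|x| ≤ |y|}, where ρ_τ(u) = u(τ − 1_{u<0}). -/
set_option maxHeartbeats 1000000 in
/-- bound on the linearization remainder of the check function. -/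
theorem check_function_remainder_bound (τ : ℝ) (hτ : τ ∈ Set.Ioo (0 : ℝ) 1)
    (x y : ℝ) :
    |rho τ (x - y) - rho τ x - y * ((if x ≤ 0 then (1 : ℝ) else 0) - τ)| ≤
      |y| * (if |x| ≤ |y| then (1 : ℝ) else 0) := by
  obtain ⟨h0, h1⟩ := hτ
  unfold rho
  rcases abs_cases x with ⟨hx, hx'⟩ | ⟨hx, hx'⟩ <;>
  rcases abs_cases y with ⟨hy, hy'⟩ | ⟨hy, hy'⟩ <;>
  split_ifs <;>
  rw [abs_le] <;>
  constructor <;>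
  linarith
end

section
/- Let ε be a real random variable with distribution function F(t) = P(ε ≤ t), let τ ∈ (0,1) and a ∈ ℝ. Then the increment ρ_τ(ε − a) − ρ_τ(ε) is integrable (it is bounded in absolute value by |a|) and E[ρ_τ(ε − a) − ρ_τ(ε)] = a(F(0) − τ) + ∫₀^a (F(t) − F(0)) dt. In particular, if F(0) = τ then E[ρ_τ(ε − a) − ρ_τ(ε)] = ∫₀^a (F(t) − F(0)) dt. -/
open MeasureTheory ProbabilityTheory

lemma rho_diff (τ a x : ℝ) :
    rho τ (x - a) - rho τ x = -(τ*a) + (max (a - x) 0 - max (-x) 0) := by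
  have m1 : max (a - x) 0 = if x - a < 0 then a - x else 0 := by
    split_ifs with h
    · exact max_eq_left (by linarith)
    · exact max_eq_right (by linarith)
  have m2 : max (-x) 0 = if x < 0 then -x else 0 := by
    split_ifs with h
    · exact max_eq_left (by linarith)
    · exact max_eq_right (by linarith)
  unfold rho
  rw [m1, m2]
  split_ifs <;> ring

lemma maxdiff_bounds (a x : ℝ) :
    min a 0 ≤ max (a - x) 0 - max (-x) 0 ∧ max (a - x) 0 - max (-x) 0 ≤ max a 0 := by
  constructor <;>
  · rcases le_total (a - x) 0 with h | h <;> rcases le_total (-x) 0 with h' | h' <;>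
      simp [max_eq_left, max_eq_right, min_le_iff, le_max_iff, *] <;>
      first | linarith | (left; linarith) | (right; linarith)

lemma maxdiff_abs_le (a x : ℝ) : |max (a - x) 0 - max (-x) 0| ≤ |a| := by
  obtain ⟨h1, h2⟩ := maxdiff_bounds a x
  rw [abs_le]
  constructor
  · calc -|a| ≤ min a 0 := by rcases le_total a 0 with h|h <;>
        simp [min_eq_left, min_eq_right, abs_of_nonpos, abs_of_nonneg, *] <;> linarith
    _ ≤ _ := h1
  · calc _ ≤ max a 0 := h2
    _ ≤ |a| := by rcases le_total a 0 with h|h <;>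
        simp [max_eq_left, max_eq_right, abs_of_nonpos, abs_of_nonneg, *] <;> linarith

lemma rho_diff_abs_le (τ a x : ℝ) (hτ : τ ∈ Set.Ioo (0:ℝ) 1) :
    |rho τ (x - a) - rho τ x| ≤ |a| := by
  obtain ⟨h1, h2⟩ := maxdiff_bounds a x
  obtain ⟨ht0, ht1⟩ := hτ
  rw [rho_diff, abs_le]
  rcases le_total a 0 with ha | ha
  · rw [min_eq_left ha] at h1; rw [max_eq_right ha] at h2
    rw [abs_of_nonpos ha]
    constructor <;> nlinarith
  · rw [min_eq_right ha] at h1; rw [max_eq_left ha] at h2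
    rw [abs_of_nonneg ha]
    constructor <;> nlinarith

lemma key {Ω : Type*} [MeasureSpace Ω] [IsProbabilityMeasure (ℙ : Measure Ω)]
    (ε : Ω → ℝ) (hε : Measurable ε) (b c : ℝ) (hbc : b ≤ c) :
    ∫ ω, (max (c - ε ω) 0 - max (b - ε ω) 0) ∂ℙ
      = ∫ t in Set.Ioc b c, (ℙ {ω | ε ω ≤ t}).toReal := by
  set S : Set (Ω × ℝ) := {p | ε p.1 ≤ p.2} ∩ (Set.univ ×ˢ Set.Ioc b c) with hSdef
  have hS : MeasurableSet S :=
    (measurableSet_le (hε.comp measurable_fst) measurable_snd).inter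
      (MeasurableSet.univ.prod measurableSet_Ioc)
  have h1 : ((ℙ : Measure Ω).prod volume) S
      = ∫⁻ ω, ENNReal.ofReal (max (c - ε ω) 0 - max (b - ε ω) 0) ∂ℙ := by
    rw [Measure.prod_apply hS]
    refine lintegral_congr fun ω => ?_
    have hset : Prod.mk ω ⁻¹' S = Set.Ici (ε ω) ∩ Set.Ioc b c := by
      ext t
      simp only [hSdef, Set.mem_inter_iff, Set.mem_setOf_eq, Set.mem_preimage,
        Set.mem_prod, Set.mem_univ, true_and, Set.mem_Ici]
    rw [hset]
    rcases le_or_gt (ε ω) b with h | h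
    · have : Set.Ici (ε ω) ∩ Set.Ioc b c = Set.Ioc b c :=
        Set.inter_eq_right.2 (fun t ht => le_trans h (le_of_lt ht.1))
      rw [this, Real.volume_Ioc]
      congr 1
      rw [max_eq_left (by linarith), max_eq_left (by linarith)]
      ring
    · have : Set.Ici (ε ω) ∩ Set.Ioc b c = Set.Icc (ε ω) c := by
        ext t
        simp only [Set.mem_inter_iff, Set.mem_Ici, Set.mem_Ioc, Set.mem_Icc]
        constructor
        · rintro ⟨h1, _, h3⟩; exact ⟨h1, h3⟩
        · rintro ⟨h1, h2⟩; exact ⟨h1, lt_of_lt_of_le h h1, h2⟩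
      rw [this, Real.volume_Icc]
      rw [max_eq_right (by linarith : b - ε ω ≤ 0), sub_zero]
      rcases le_total (c - ε ω) 0 with h' | h'
      · rw [max_eq_right h', ENNReal.ofReal_eq_zero.2 h', ENNReal.ofReal_zero]
      · rw [max_eq_left h']
  have h2 : ((ℙ : Measure Ω).prod volume) S = ∫⁻ t in Set.Ioc b c, ℙ {ω | ε ω ≤ t} := by
    rw [Measure.prod_apply_symm hS]
    rw [← lintegral_indicator measurableSet_Ioc]
    refine lintegral_congr fun t => ?_
    rcases Classical.em (t ∈ Set.Ioc b c) with h | h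
    · rw [Set.indicator_of_mem h]
      congr 1
      ext ω; simp [hSdef, h]
    · rw [Set.indicator_of_notMem h]
      have : (fun ω => (ω, t)) ⁻¹' S = ∅ := by
        ext ω
        simp only [hSdef, Set.mem_preimage, Set.mem_inter_iff, Set.mem_setOf_eq,
          Set.mem_prod, Set.mem_univ, true_and, Set.mem_empty_iff_false, iff_false, not_and]
        intro _ ht; exact h ht
      rw [this, measure_empty]
  have hnn : 0 ≤ᵐ[ℙ] fun ω => max (c - ε ω) 0 - max (b - ε ω) 0 := by
    refine Filter.Eventually.of_forall fun ω => ?_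
    simp only [Pi.zero_apply, sub_nonneg]
    exact max_le_max (by linarith) le_rfl
  have hm : AEStronglyMeasurable (fun ω => max (c - ε ω) 0 - max (b - ε ω) 0) ℙ :=
    (((measurable_const.sub hε).max measurable_const).sub
      ((measurable_const.sub hε).max measurable_const)).aestronglyMeasurable
  rw [integral_eq_lintegral_of_nonneg_ae hnn hm, ← h1, h2]
  rw [integral_toReal]
  · have : Monotone fun t : ℝ => ℙ {ω | ε ω ≤ t} := by
      intro s t hst
      exact measure_mono fun ω (hω : ε ω ≤ s) => le_trans hω hst
    exact this.measurable.aemeasurable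
  · exact Filter.Eventually.of_forall fun t => measure_lt_top _ _

/-- expectation of the check-function increment through the
distribution function `F` of `ε`. -/
theorem expectation_check_increment
    {Ω : Type*} [MeasureSpace Ω] [IsProbabilityMeasure (ℙ : Measure Ω)]
    (ε : Ω → ℝ) (hε : Measurable ε) (τ a : ℝ) (hτ : τ ∈ Set.Ioo (0 : ℝ) 1)
    (F : ℝ → ℝ) (hF : ∀ t, F t = (ℙ {ω | ε ω ≤ t}).toReal) :
    (∀ ω, |rho τ (ε ω - a) - rho τ (ε ω)| ≤ |a|) ∧
      Integrable (fun ω => rho τ (ε ω - a) - rho τ (ε ω)) ∧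
      (∫ ω, (rho τ (ε ω - a) - rho τ (ε ω))) =
        a * (F 0 - τ) + ∫ t in (0 : ℝ)..a, (F t - F 0) ∧
      (F 0 = τ →
        (∫ ω, (rho τ (ε ω - a) - rho τ (ε ω))) =
          ∫ t in (0 : ℝ)..a, (F t - F 0)) := by
  have hfun : (fun ω => rho τ (ε ω - a) - rho τ (ε ω))
      = fun ω => -(τ*a) + (max (a - ε ω) 0 - max (-(ε ω)) 0) :=
    funext fun ω => rho_diff τ a (ε ω)
  -- monotonicity of F
  have hFmono : Monotone F := by
    intro s t hst
    rw [hF s, hF t]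
    exact ENNReal.toReal_mono (measure_ne_top _ _)
      (measure_mono fun ω (hω : ε ω ≤ s) => le_trans hω hst)
  have hFint : IntervalIntegrable F volume 0 a := hFmono.intervalIntegrable
  -- integrability
  have hmeas : Measurable (fun ω => max (a - ε ω) 0 - max (-(ε ω)) 0) :=
    ((measurable_const.sub hε).max measurable_const).sub
      (hε.neg.max measurable_const)
  have hint2 : Integrable (fun ω => max (a - ε ω) 0 - max (-(ε ω)) 0) (ℙ : Measure Ω) :=
    ⟨hmeas.aestronglyMeasurable,
      HasFiniteIntegral.of_bounded (C := |a|)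
        (Filter.Eventually.of_forall fun ω => by
          rw [Real.norm_eq_abs]; exact maxdiff_abs_le a (ε ω))⟩
  have hint : Integrable (fun ω => rho τ (ε ω - a) - rho τ (ε ω)) (ℙ : Measure Ω) := by
    rw [hfun]
    exact (integrable_const _).add hint2
  -- the integral of the max-difference part
  have hmain : (∫ ω, (max (a - ε ω) 0 - max (-(ε ω)) 0)) = ∫ t in (0:ℝ)..a, F t := by
    rcases le_total 0 a with ha | ha
    · have := key ε hε 0 a ha
      rw [intervalIntegral.integral_of_le ha]
      calc (∫ ω, (max (a - ε ω) 0 - max (-(ε ω)) 0))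
          = ∫ ω, (max (a - ε ω) 0 - max (0 - ε ω) 0) ∂ℙ := by
            congr 1; funext ω; rw [zero_sub]
        _ = ∫ t in Set.Ioc (0:ℝ) a, (ℙ {ω | ε ω ≤ t}).toReal := this
        _ = ∫ t in Set.Ioc (0:ℝ) a, F t := by
            refine setIntegral_congr_fun measurableSet_Ioc fun t _ => (hF t).symm
    · have := key ε hε a 0 ha
      rw [intervalIntegral.integral_symm, intervalIntegral.integral_of_le ha]
      calc (∫ ω, (max (a - ε ω) 0 - max (-(ε ω)) 0))
          = -∫ ω, (max (0 - ε ω) 0 - max (a - ε ω) 0) ∂ℙ := by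
            rw [← integral_neg]; congr 1; funext ω; rw [zero_sub]; ring
        _ = -∫ t in Set.Ioc a (0:ℝ), (ℙ {ω | ε ω ≤ t}).toReal := by rw [this]
        _ = -∫ t in Set.Ioc a (0:ℝ), F t := by
            congr 1
            refine setIntegral_congr_fun measurableSet_Ioc fun t _ => (hF t).symm
  have hval : (∫ ω, (rho τ (ε ω - a) - rho τ (ε ω))) = -(τ*a) + ∫ t in (0:ℝ)..a, F t := by
    rw [hfun, integral_add (integrable_const _) hint2, integral_const, hmain]
    simp
  have hIrhs : (∫ t in (0:ℝ)..a, (F t - F 0)) = (∫ t in (0:ℝ)..a, F t) - a * F 0 := by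
    rw [intervalIntegral.integral_sub hFint intervalIntegrable_const,
      intervalIntegral.integral_const]
    simp [smul_eq_mul]
  have hthird : (∫ ω, (rho τ (ε ω - a) - rho τ (ε ω))) =
      a * (F 0 - τ) + ∫ t in (0 : ℝ)..a, (F t - F 0) := by
    rw [hval, hIrhs]; ring
  refine ⟨fun ω => rho_diff_abs_le τ a (ε ω) hτ, hint, hthird, fun h0 => ?_⟩
  rw [hthird, h0]
  ring
end

section
/- Let τ ∈ (0,1), let ε₁,…,ε_n be independent real random variables, and let a₁,…,a_n ∈ ℝ. Define R_i = ρ_τ(ε_i − a_i) − ρ_τ(ε_i) − a_i (1_{ε_i ≤ 0} − τ), with ρ_τ(u) = u(τ − 1_{u<0}). Then E[ ( Σ_{i=1}^n (R_i − E[R_i]) )² ] ≤ Σ_{i=1}^n a_i² · P( |ε_i| ≤ |a_i| ). -/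
open MeasureTheory ProbabilityTheory

set_option maxHeartbeats 1000000 in
lemma rho_remainder_abs_le (τ a x : ℝ) :
    |rho τ (x - a) - rho τ x - a * ((if x ≤ 0 then (1 : ℝ) else 0) - τ)|
      ≤ if |x| ≤ |a| then |a| else 0 := by
  unfold rho
  rcases abs_cases x with ⟨ex, sx⟩ | ⟨ex, sx⟩ <;>
  rcases abs_cases a with ⟨ea, sa⟩ | ⟨ea, sa⟩ <;>
  rw [abs_le] <;> constructor <;> split_ifs <;> linarith

/-- variance bound for the sum of centered linearization
remainders of the check function. -/
theorem variance_bound_check_remainders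
    {Ω : Type*} [MeasureSpace Ω] [IsProbabilityMeasure (ℙ : Measure Ω)]
    (τ : ℝ) (hτ : τ ∈ Set.Ioo (0 : ℝ) 1) (n : ℕ)
    (ε : Fin n → Ω → ℝ) (hmeas : ∀ i, Measurable (ε i))
    (hindep : iIndepFun ε ℙ)
    (a : Fin n → ℝ)
    (R : Fin n → Ω → ℝ)
    (hR : ∀ i ω, R i ω =
      rho τ (ε i ω - a i) - rho τ (ε i ω) -
        a i * ((if ε i ω ≤ 0 then (1 : ℝ) else 0) - τ)) :
    (∫ ω, (∑ i, (R i ω - ∫ ω', R i ω')) ^ 2) ≤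
      ∑ i, a i ^ 2 * (ℙ {ω | |ε i ω| ≤ |a i|}).toReal := by
  classical
  -- the function producing R i from ε i
  set f : Fin n → ℝ → ℝ := fun i x =>
    rho τ (x - a i) - rho τ x - a i * ((if x ≤ 0 then (1 : ℝ) else 0) - τ) with hf
  have hfm : ∀ i, Measurable (f i) := by
    intro i
    simp only [hf]
    unfold rho
    apply Measurable.sub
    · apply Measurable.sub
      · exact (measurable_id.sub_const _).mul
          (measurable_const.sub (Measurable.ite
            (measurableSet_lt (measurable_id.sub_const _) measurable_const)
            measurable_const measurable_const))
      · exact measurable_id.mul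
          (measurable_const.sub (Measurable.ite
            (measurableSet_lt measurable_id measurable_const)
            measurable_const measurable_const))
    · exact measurable_const.mul
        ((Measurable.ite (measurableSet_le measurable_id measurable_const)
          measurable_const measurable_const).sub measurable_const)
  have hRe : ∀ i, R i = f i ∘ ε i := fun i => funext fun ω => hR i ω
  have hRmeas : ∀ i, Measurable (R i) := by
    intro i; rw [hRe i]; exact (hfm i).comp (hmeas i)
  -- pointwise bound
  have hbd : ∀ i ω, |R i ω| ≤ if |ε i ω| ≤ |a i| then |a i| else 0 := by
    intro i ω; rw [hR i ω]; exact rho_remainder_abs_le τ (a i) (ε i ω)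
  have hbd' : ∀ i ω, |R i ω| ≤ |a i| := by
    intro i ω
    refine le_trans (hbd i ω) ?_
    split_ifs <;> simp [abs_nonneg]
  -- Memℒp 2
  have hL2 : ∀ i, MemLp (R i) 2 ℙ := by
    intro i
    refine (memLp_top_of_bound (hRmeas i).aestronglyMeasurable (|a i|)
      (Filter.Eventually.of_forall fun ω => ?_)).mono_exponent le_top
    simpa using hbd' i ω
  have hInt : ∀ i, Integrable (R i) := fun i => (hL2 i).integrable one_le_two
  -- independence of R
  have hindR : iIndepFun R ℙ := by
    have := hindep.comp f hfm
    convert this using 2 with i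
    exact hRe i
  -- rewrite LHS as variance of the sum
  have hLHS : (∫ ω, (∑ i, (R i ω - ∫ ω', R i ω')) ^ 2)
      = variance (∑ i, R i) ℙ := by
    rw [variance_eq_integral (show Measurable (∑ i, R i) by
      simpa only [← Finset.sum_apply] using Finset.measurable_sum Finset.univ fun i _ => hRmeas i).aemeasurable]
    congr 1
    ext ω
    simp only [Pi.pow_apply, Pi.sub_apply, Finset.sum_apply]
    rw [integral_finset_sum _ (fun i _ => hInt i), Finset.sum_sub_distrib]
  rw [hLHS,
    IndepFun.variance_sum (fun i _ => hL2 i)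
      (fun i _ j _ hij => hindR.indepFun hij)]
  -- bound each variance
  refine Finset.sum_le_sum fun i _ => ?_
  have hS : MeasurableSet {ω | |ε i ω| ≤ |a i|} :=
    measurableSet_le ((hmeas i).abs) measurable_const
  have step1 : variance (R i) ℙ ≤ ∫ ω, (R i ω) ^ 2 :=
    variance_le_expectation_sq (hRmeas i).aestronglyMeasurable
  refine step1.trans ?_
  have step2 : ∫ ω, (R i ω) ^ 2
      ≤ ∫ ω, ({ω | |ε i ω| ≤ |a i|}).indicator (fun _ => a i ^ 2) ω := by
    refine integral_mono ((hL2 i).integrable_sq) ((integrable_const _).indicator hS) ?_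
    intro ω
    by_cases h : |ε i ω| ≤ |a i|
    · rw [Set.indicator_of_mem (show ω ∈ {ω | |ε i ω| ≤ |a i|} from h)]
      have := hbd' i ω
      calc (R i ω) ^ 2 = |R i ω| ^ 2 := (sq_abs _).symm
        _ ≤ |a i| ^ 2 := by nlinarith [abs_nonneg (R i ω)]
        _ = a i ^ 2 := sq_abs _
    · rw [Set.indicator_of_notMem (show ω ∉ {ω | |ε i ω| ≤ |a i|} from h)]
      have h1 := hbd i ω
      rw [if_neg h] at h1
      have : R i ω = 0 := abs_nonpos_iff.mp h1
      simp [this]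
  refine step2.trans ?_
  rw [integral_indicator_const _ hS]
  simp [mul_comm, measureReal_def]
end
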